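/- arXiv:1812.05432 — 8 statements merged into one kernel-verified Lean document; each statement's English description precedes it below -/
import Mathlib

section
/- Let A be a groupoid. Let N_A denote the set of pairs (F, σ) where F is a strict automorphism of A and σ : 𝟭_A ⟹ F is a natural transformation. Then N_A is a group under the operation (G, γ) ⊛ (F, σ) := (F ⋙ G, x ↦ σ(x)·γ(F(x))) (whose second component is a natural transformation 𝟭_A ⟹ F ⋙ G with component at x the composite of σ(x) : x ⟶ F(x) and γ(F(x)) : F(x) ⟶ G(F(x)))), with identity element (𝟭_A, the identity natural transformation) and with the inverse of (F, σ) given by (F⁻¹, x ↦ σ(F⁻¹(x))⁻¹). -/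
/-!
Statement 0: For a groupoid `A`, the set `N_A` of pairs `(F, σ)` — `F` a strict
automorphism of `A` and `σ : 𝟭_A ⟹ F` a natural transformation — is a group under
`(G, γ) ⊛ (F, σ) := (F ⋙ G, x ↦ σ(x)·γ(F(x)))`, with identity `(𝟭_A, id)` and with
the inverse of `(F, σ)` given by `(F⁻¹, x ↦ σ(F⁻¹(x))⁻¹)`.
(Composition of arrows is written left-to-right, i.e. `α ≫ β`.)
-/

open CategoryTheory

universe v u

/-- A strict automorphism of a groupoid: a functor with a strict inverse. -/
structure GrpdAut (A : Type u) [Groupoid A] where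
  F : A ⥤ A
  inv : A ⥤ A
  comp_inv : F ⋙ inv = 𝟭 A
  inv_comp : inv ⋙ F = 𝟭 A

variable {A : Type u} [Groupoid A]

/-- The identity strict automorphism. -/
def GrpdAut.one (A : Type u) [Groupoid A] : GrpdAut A := ⟨𝟭 A, 𝟭 A, rfl, rfl⟩

/-- Composition of strict automorphisms, written left-to-right: first `f`, then `g`. -/
def GrpdAut.comp (f g : GrpdAut A) : GrpdAut A where
  F := f.F ⋙ g.F
  inv := g.inv ⋙ f.inv
  comp_inv := by
    rw [Functor.assoc, ← Functor.assoc g.F, g.comp_inv, Functor.id_comp, f.comp_inv]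
  inv_comp := by
    rw [Functor.assoc, ← Functor.assoc f.inv, f.inv_comp, Functor.id_comp, g.inv_comp]

/-- The inverse strict automorphism `F⁻¹`. -/
def GrpdAut.symm (f : GrpdAut A) : GrpdAut A := ⟨f.inv, f.F, f.inv_comp, f.comp_inv⟩

theorem GrpdAut.F_inv_obj (f : GrpdAut A) (a : A) : f.F.obj (f.inv.obj a) = a :=
  Functor.congr_obj f.inv_comp a

theorem GrpdAut.inv_F_obj (f : GrpdAut A) (a : A) : f.inv.obj (f.F.obj a) = a :=
  Functor.congr_obj f.comp_inv a

/-- An element of `N_A`: a strict automorphism `F` of `A` together with a natural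
transformation `σ : 𝟭_A ⟹ F`. -/
structure NElem (A : Type u) [Groupoid A] where
  F : GrpdAut A
  σ : 𝟭 A ⟶ F.F

/-- The identity element `(𝟭_A, identity natural transformation)` of `N_A`. -/
def NElem.one (A : Type u) [Groupoid A] : NElem A := ⟨GrpdAut.one A, 𝟙 (𝟭 A)⟩

/-- The product `(G, γ) ⊛ (F, σ) := (F ⋙ G, x ↦ σ(x)·γ(F(x)))`:
`NElem.mul g f` is `g ⊛ f`. -/
def NElem.mul (g f : NElem A) : NElem A where
  F := f.F.comp g.F
  σ :=
    { app := fun x => f.σ.app x ≫ g.σ.app (f.F.F.obj x)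
      naturality := by
        intro x y h
        have h1 := f.σ.naturality h
        have h2 := g.σ.naturality (f.F.F.map h)
        simp only [Functor.id_map] at h1 h2
        change h ≫ f.σ.app y ≫ g.σ.app (f.F.F.obj y) =
          (f.σ.app x ≫ g.σ.app (f.F.F.obj x)) ≫ g.F.F.map (f.F.F.map h)
        rw [← Category.assoc, h1, Category.assoc, h2, Category.assoc] }

/-- The inverse `(F, σ)⁻¹ := (F⁻¹, x ↦ σ(F⁻¹(x))⁻¹)`; the strict identification
`F(F⁻¹(x)) = x` is implemented by `eqToHom`. -/
def NElem.inv (f : NElem A) : NElem A where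
  F := f.F.symm
  σ :=
    { app := fun x =>
        eqToHom (f.F.F_inv_obj x).symm ≫ Groupoid.inv (f.σ.app (f.F.inv.obj x))
      naturality := by
        intro x y h
        have h1 := f.σ.naturality (f.F.inv.map h)
        simp only [Functor.id_map] at h1
        have h2 := Functor.congr_hom f.F.inv_comp h
        simp only [Functor.comp_map, Functor.id_map] at h2
        simp only [Functor.id_map, GrpdAut.symm, Groupoid.inv_eq_inv]
        rw [← cancel_mono (f.σ.app (f.F.inv.obj y))]
        simp only [Category.assoc, IsIso.inv_hom_id, Category.comp_id]
        rw [h1, h2]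
        simp }

/-!
An element of `N_A` is determined by its functor and the components of its transformation,
and the strict inverse of a functor is unique, so each group law is checked componentwise: on
functors it is the corresponding law of `Aut(A)`, and on components it reduces to associativity
of composition, `σ x ≫ (σ x)⁻¹ = 𝟙`, and naturality of `σ` along the identification `F⁻¹ (F x) = x`.
-/

namespace GrpdAut

theorem inv_eq_of_F_eq {f g : GrpdAut A} (h : f.F = g.F) : f.inv = g.inv :=
  calc f.inv = f.inv ⋙ g.F ⋙ g.inv := by rw [g.comp_inv]; rfl
    _ = (f.inv ⋙ f.F) ⋙ g.inv := by rw [h]; rfl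
    _ = g.inv := by rw [f.inv_comp]; rfl

theorem ext {f g : GrpdAut A} (h : f.F = g.F) : f = g := by
  have hinv := inv_eq_of_F_eq h
  cases f; cases g; cases h; cases hinv; rfl

theorem comp_symm (f : GrpdAut A) : f.comp f.symm = one A := ext f.comp_inv

theorem symm_comp (f : GrpdAut A) : f.symm.comp f = one A := ext f.inv_comp

end GrpdAut

namespace NElem

theorem ext {f g : NElem A} (hF : f.F = g.F)
    (hσ : ∀ x, f.σ.app x ≫ eqToHom (by rw [hF]) = g.σ.app x) : f = g := by
  obtain ⟨F, σ⟩ := f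
  obtain ⟨G, γ⟩ := g
  cases hF
  congr
  ext x
  simpa using hσ x

attribute [local simp] mul one inv GrpdAut.comp GrpdAut.one GrpdAut.symm Groupoid.inv_eq_inv

theorem mul_assoc (f g h : NElem A) : h.mul (g.mul f) = (h.mul g).mul f :=
  ext rfl fun _ => by simp

theorem mul_one (f : NElem A) : f.mul (one A) = f :=
  ext rfl fun _ => by simp

theorem one_mul (f : NElem A) : (one A).mul f = f :=
  ext rfl fun _ => by simp

-- Naturality of `σ` along `F⁻¹ (F x) = x` identifies `σ (F⁻¹ (F x))` with `σ x` up to `eqToHom`.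
theorem inv_mul (f : NElem A) : f.inv.mul f = one A :=
  ext f.F.comp_symm fun x => by
    simp only [Functor.id_obj, one, GrpdAut.one, inv, GrpdAut.symm, mul, GrpdAut.comp,
      Functor.comp_obj, Groupoid.inv_eq_inv, f.σ.congr (f.F.inv_F_obj x), Functor.id_map,
      eqToHom_map, IsIso.inv_comp, inv_eqToHom, Category.assoc, eqToHom_trans_assoc, eqToHom_refl,
      Category.id_comp, IsIso.hom_inv_id_assoc, NatTrans.id_app]
    exact (eqToHom_trans _ _).trans (eqToHom_refl _ _)

theorem mul_inv (f : NElem A) : f.mul f.inv = one A :=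
  ext f.F.symm_comp fun x => by
    simp only [Functor.id_obj, one, GrpdAut.one, inv, GrpdAut.symm, mul, GrpdAut.comp,
      Functor.comp_obj, Groupoid.inv_eq_inv, Category.assoc, IsIso.inv_hom_id, Category.comp_id,
      NatTrans.id_app]
    exact (eqToHom_trans _ _).trans (eqToHom_refl _ _)

end NElem

/-- `N_A` is a group under `⊛`, with identity `(𝟭_A, id)` and
inverse `(F, σ)⁻¹ = (F⁻¹, x ↦ σ(F⁻¹(x))⁻¹)`. -/
theorem nElem_group (A : Type u) [Groupoid A] :
    (∀ f g h : NElem A, NElem.mul h (NElem.mul g f) = NElem.mul (NElem.mul h g) f) ∧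
    (∀ f : NElem A, NElem.mul f (NElem.one A) = f) ∧
    (∀ f : NElem A, NElem.mul (NElem.one A) f = f) ∧
    (∀ f : NElem A, NElem.mul (NElem.inv f) f = NElem.one A) ∧
    (∀ f : NElem A, NElem.mul f (NElem.inv f) = NElem.one A) :=
  ⟨NElem.mul_assoc, NElem.mul_one, NElem.one_mul, NElem.inv_mul, NElem.mul_inv⟩
end

section
/- Let (Λ, Ω) be a generalized cocycle on (K, A). Then there is a groupoid A ⋊_{Λ,Ω} K whose objects are pairs (a, x) with a an object of A and x an object of K, and whose arrows are pairs (α, ξ) with α an arrow of A and ξ an arrow of K, where: the source of (α,ξ) is (s(α), s(ξ)); the target of (α,ξ) is (Λ_ξ(t(α)), t(ξ)); the identity arrow of (a,x) is (1_a, 1_x); the composite of (α,ξ) and (β,η), defined whenever s(β) = Λ_ξ(t(α)) and s(η) = t(ξ), is (α,ξ)·(β,η) := (Ω(ξ,η,s(α))·Λ_{ξη}⁻¹Λ_ηΛ_ξ(α)·Λ_{ξη}⁻¹Λ_η(β), ξη); and the inverse of (α,ξ) is (Λ_ξ(α⁻¹)·Λ_{ξ⁻¹}⁻¹(Ω(ξ,ξ⁻¹,s(α))⁻¹),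 ξ⁻¹). That is: this composition is associative, the pairs (1_a,1_x) are two-sided units, and the stated inverse is a two-sided inverse. -/
open CategoryTheory
universe v u v' u'
variable {K : Type u} [Groupoid K] {A : Type u'} [Groupoid A]
structure PreAction (K : Type u) (A : Type u') [Groupoid K] [Groupoid A] where
  map : ∀ {x y : K}, (x ⟶ y) → (A ⥤ A)
  inv : ∀ {x y : K}, (x ⟶ y) → (A ⥤ A)
  comp_inv : ∀ {x y : K} (ξ : x ⟶ y), map ξ ⋙ inv ξ = 𝟭 A
  inv_comp : ∀ {x y : K} (ξ : x ⟶ y), inv ξ ⋙ map ξ = 𝟭 A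
  map_id : ∀ x : K, map (𝟙 x) = 𝟭 A
namespace PreAction
variable (P : PreAction K A)
theorem inv_id (x : K) : P.inv (𝟙 x) = 𝟭 A := by
  have h := P.inv_comp (𝟙 x); rw [P.map_id, Functor.comp_id] at h; exact h
@[simp] theorem inv_map_obj {x y : K} (ξ : x ⟶ y) (a : A) :
    (P.inv ξ).obj ((P.map ξ).obj a) = a := Functor.congr_obj (P.comp_inv ξ) a
@[simp] theorem map_inv_obj {x y : K} (ξ : x ⟶ y) (a : A) :
    (P.map ξ).obj ((P.inv ξ).obj a) = a := Functor.congr_obj (P.inv_comp ξ) a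
@[simp] theorem map_id_obj (x : K) (a : A) : (P.map (𝟙 x)).obj a = a :=
  Functor.congr_obj (P.map_id x) a
@[simp] theorem inv_id_obj (x : K) (a : A) : (P.inv (𝟙 x)).obj a = a :=
  Functor.congr_obj (P.inv_id x) a
theorem cof_obj_id_left {x y : K} (η : x ⟶ y) (a : A) :
    a = (P.inv (𝟙 x ≫ η)).obj ((P.map η).obj ((P.map (𝟙 x)).obj a)) := by
  rw [Category.id_comp]; simp
theorem cof_obj_id_right {x y : K} (ξ : x ⟶ y) (a : A) :
    a = (P.inv (ξ ≫ 𝟙 y)).obj ((P.map (𝟙 y)).obj ((P.map ξ).obj a)) := by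
  rw [Category.comp_id]; simp
end PreAction
structure Cofactor (P : PreAction K A) where
  Ω : ∀ {x y z : K} (ξ : x ⟶ y) (η : y ⟶ z) (a : A),
      a ⟶ (P.inv (ξ ≫ η)).obj ((P.map η).obj ((P.map ξ).obj a))
  naturality : ∀ {x y z : K} (ξ : x ⟶ y) (η : y ⟶ z) {a b : A} (h : a ⟶ b),
      h ≫ Ω ξ η b = Ω ξ η a ≫ (P.inv (ξ ≫ η)).map ((P.map η).map ((P.map ξ).map h))
  id_left : ∀ {x y : K} (η : x ⟶ y) (a : A),
      Ω (𝟙 x) η a = eqToHom (P.cof_obj_id_left η a)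
  id_right : ∀ {x y : K} (ξ : x ⟶ y) (a : A),
      Ω ξ (𝟙 y) a = eqToHom (P.cof_obj_id_right ξ a)
def IsGenCocycle {P : PreAction K A} (C : Cofactor P) : Prop :=
  ∀ {x y z w : K} (ξ : x ⟶ y) (η : y ⟶ z) (ζ : z ⟶ w) (a : A),
    C.Ω ξ η a ≫
      C.Ω (ξ ≫ η) ζ ((P.inv (ξ ≫ η)).obj ((P.map η).obj ((P.map ξ).obj a))) ≫
      eqToHom (by simp) =
    eqToHom (by simp) ≫
      (P.inv ξ).map (C.Ω η ζ ((P.map ξ).obj a)) ≫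
      C.Ω ξ (η ≫ ζ)
        ((P.inv ξ).obj ((P.inv (η ≫ ζ)).obj ((P.map ζ).obj ((P.map η).obj ((P.map ξ).obj a)))))

variable {P : PreAction K A} (C : Cofactor P)

/-- The first (A-)component of the composite
`(α,ξ)·(β,η) := (Ω(ξ,η,s(α))·Λ_{ξη}⁻¹Λ_ηΛ_ξ(α)·Λ_{ξη}⁻¹Λ_η(β), ξη)` in `A ⋊ K`. -/
def sdComp {x y z : K} (ξ : x ⟶ y) (η : y ⟶ z) {a b : A} (α : a ⟶ b)
    {c : A} (β : (P.map ξ).obj b ⟶ c) :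
    a ⟶ (P.inv (ξ ≫ η)).obj ((P.map η).obj c) :=
  C.Ω ξ η a ≫ (P.inv (ξ ≫ η)).map ((P.map η).map ((P.map ξ).map α)) ≫
    (P.inv (ξ ≫ η)).map ((P.map η).map β)

/-- The first (A-)component of the inverse
`(α,ξ)⁻¹ := (Λ_ξ(α⁻¹)·Λ_{ξ⁻¹}⁻¹(Ω(ξ,ξ⁻¹,s(α))⁻¹), ξ⁻¹)` in `A ⋊ K`. -/
def sdInv {x y : K} (ξ : x ⟶ y) {a b : A} (α : a ⟶ b) :
    (P.map ξ).obj b ⟶ (P.inv (Groupoid.inv ξ)).obj a :=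
  (P.map ξ).map (Groupoid.inv α) ≫ eqToHom (by rw [Groupoid.comp_inv]; simp) ≫
    (P.inv (Groupoid.inv ξ)).map (Groupoid.inv (C.Ω ξ (Groupoid.inv ξ) a))

-- helper lemmas
theorem inv_congr (P : PreAction K A) {x y : K} {σ σ' : x ⟶ y} (h : σ = σ') :
    P.inv σ = P.inv σ' := by rw [h]

theorem inv_congr_hom (P : PreAction K A) {x y : K} {σ σ' : x ⟶ y} (h : σ = σ')
    {a b : A} (f : a ⟶ b) :
    (P.inv σ).map f =
      eqToHom (by rw [h]) ≫ (P.inv σ').map f ≫ eqToHom (by rw [h]) := by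
  subst h; simp

theorem inv_map_hom (P : PreAction K A) {x y : K} (ξ : x ⟶ y) {a b : A} (f : a ⟶ b) :
    (P.inv ξ).map ((P.map ξ).map f) = eqToHom (by simp) ≫ f ≫ eqToHom (by simp) := by
  have := Functor.congr_hom (P.comp_inv ξ) f; simpa using this

theorem map_inv_hom (P : PreAction K A) {x y : K} (ξ : x ⟶ y) {a b : A} (f : a ⟶ b) :
    (P.map ξ).map ((P.inv ξ).map f) = eqToHom (by simp) ≫ f ≫ eqToHom (by simp) := by
  have := Functor.congr_hom (P.inv_comp ξ) f; simpa using this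

-- left unit
theorem sd_left_unit {x y : K} (ξ : x ⟶ y) {a b : A} (α : a ⟶ b) :
      sdComp C (𝟙 x) ξ (𝟙 a) (eqToHom (by simp) ≫ α) = α ≫ eqToHom (by simp) := by
  simp only [sdComp, C.id_left, P.map_id, Functor.id_map, Functor.map_id, Functor.map_comp,
    eqToHom_map, Category.id_comp]
  rw [inv_congr_hom P (Category.id_comp ξ) ((P.map ξ).map α), inv_map_hom]
  simp

-- right unit
theorem sd_right_unit {x y : K} (ξ : x ⟶ y) {a b : A} (α : a ⟶ b) :
      sdComp C ξ (𝟙 y) α (𝟙 ((P.map ξ).obj b)) = α ≫ eqToHom (by simp) := by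
  simp only [sdComp, C.id_right, Functor.map_id, Category.comp_id]
  rw [Functor.congr_hom (P.map_id y) ((P.map ξ).map α)]
  simp only [Functor.map_comp, eqToHom_map, Functor.id_map]
  rw [inv_congr_hom P (Category.comp_id ξ) ((P.map ξ).map α), inv_map_hom]
  simp

-- right inverse
theorem sd_right_inv {x y : K} (ξ : x ⟶ y) {a b : A} (α : a ⟶ b) :
      sdComp C ξ (Groupoid.inv ξ) α (sdInv C ξ α) =
        eqToHom (by rw [Groupoid.comp_inv]; simp) := by
  simp only [sdComp, sdInv, Functor.map_comp, eqToHom_map, Category.assoc]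
  slice_lhs 2 3 => rw [← Functor.map_comp, ← Functor.map_comp, ← Functor.map_comp]
  rw [Groupoid.comp_inv α]
  simp only [Functor.map_id, CategoryTheory.Functor.map_id]
  simp only [Category.id_comp, Category.assoc]
  rw [map_inv_hom P (Groupoid.inv ξ) (Groupoid.inv (C.Ω ξ (Groupoid.inv ξ) a))]
  simp only [Functor.map_comp, eqToHom_map]
  rw [inv_congr_hom P (Groupoid.comp_inv ξ) (Groupoid.inv (C.Ω ξ (Groupoid.inv ξ) a))]
  rw [Functor.congr_hom (P.inv_id x) (Groupoid.inv (C.Ω ξ (Groupoid.inv ξ) a))]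
  simp

theorem omega_congr_left {x y z : K} {ξ ξ' : x ⟶ y} (h : ξ = ξ') (η : y ⟶ z) (a : A) :
    C.Ω ξ η a = C.Ω ξ' η a ≫ eqToHom (by rw [h]) := by subst h; simp

theorem omega_congr_right {x y z : K} (ξ : x ⟶ y) {η η' : y ⟶ z} (h : η = η') (a : A) :
    C.Ω ξ η a = C.Ω ξ η' a ≫ eqToHom (by rw [h]) := by subst h; simp

theorem omega_obj_congr {x y z : K} (ξ : x ⟶ y) (η : y ⟶ z) {a a' : A} (h : a = a') :
    C.Ω ξ η a' = eqToHom h.symm ≫ C.Ω ξ η a ≫ eqToHom (by rw [h]) := by subst h; simp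

theorem omega_inv (hC : IsGenCocycle C) {x y : K} (ξ : x ⟶ y) (c : A) :
    C.Ω (Groupoid.inv ξ) ξ c =
      eqToHom (by simp) ≫
        (P.inv (Groupoid.inv ξ)).map (C.Ω ξ (Groupoid.inv ξ) ((P.map (Groupoid.inv ξ)).obj c)) ≫
        eqToHom (by rw [Groupoid.comp_inv, Groupoid.inv_comp]; simp) := by
  have h := hC (Groupoid.inv ξ) ξ (Groupoid.inv ξ) c
  rw [omega_congr_left C (Groupoid.inv_comp ξ) (Groupoid.inv ξ), C.id_left,
    omega_congr_right C (Groupoid.inv ξ) (Groupoid.comp_inv ξ), C.id_right] at h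
  simp only [Category.assoc, eqToHom_trans, eqToHom_trans_assoc] at h
  rw [comp_eqToHom_iff] at h
  rw [h]
  simp

-- left inverse
theorem sd_left_inv (hC : IsGenCocycle C) {x y : K} (ξ : x ⟶ y) {a b : A} (α : a ⟶ b) :
      sdComp C (Groupoid.inv ξ) ξ (sdInv C ξ α) (eqToHom (by simp) ≫ α) =
        eqToHom (by rw [Groupoid.inv_comp]; simp) := by
  simp only [sdComp]
  slice_lhs 1 2 => rw [← C.naturality (Groupoid.inv ξ) ξ (sdInv C ξ α)]
  rw [omega_inv C hC ξ ((P.inv (Groupoid.inv ξ)).obj a),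
    omega_obj_congr C ξ (Groupoid.inv ξ) (P.map_inv_obj (Groupoid.inv ξ) a).symm]
  simp only [sdInv, Category.assoc, eqToHom_trans, eqToHom_trans_assoc]
  rw [← eqToHom_map (P.inv (Groupoid.inv ξ)) (by simp)]
  simp only [← Functor.map_comp, ← Functor.map_comp_assoc, Category.assoc,
    eqToHom_trans, eqToHom_trans_assoc, eqToHom_refl, Category.id_comp, Category.comp_id,
    Groupoid.inv_comp, Functor.map_id]
  simp only [Groupoid.inv_eq_inv, IsIso.inv_hom_id_assoc, Functor.map_comp, eqToHom_map,
    Category.assoc, eqToHom_trans, eqToHom_trans_assoc]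
  rw [inv_congr_hom P (Groupoid.inv_comp ξ) ((P.map ξ).map α),
    Functor.congr_hom (P.inv_id y) ((P.map ξ).map α)]
  simp only [Functor.map_comp, eqToHom_map, Functor.id_map, eqToHom_trans_assoc, Category.assoc,
    eqToHom_trans]
  simp [← Functor.map_comp_assoc, ← Functor.map_comp]

theorem cocycle' (hC : IsGenCocycle C) {x y z w : K} (ξ : x ⟶ y) (η : y ⟶ z) (ζ : z ⟶ w) (a : A) :
    C.Ω ξ η a ≫
        C.Ω (ξ ≫ η) ζ ((P.inv (ξ ≫ η)).obj ((P.map η).obj ((P.map ξ).obj a))) =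
      eqToHom (by simp) ≫
        (P.inv ξ).map (C.Ω η ζ ((P.map ξ).obj a)) ≫
        C.Ω ξ (η ≫ ζ)
          ((P.inv ξ).obj ((P.inv (η ≫ ζ)).obj ((P.map ζ).obj ((P.map η).obj ((P.map ξ).obj a))))) ≫
        eqToHom (by simp) := by
  have h := hC ξ η ζ a
  rw [← cancel_mono (eqToHom (show
      (P.inv ((ξ ≫ η) ≫ ζ)).obj ((P.map ζ).obj ((P.map (ξ ≫ η)).obj
        ((P.inv (ξ ≫ η)).obj ((P.map η).obj ((P.map ξ).obj a))))) =
      (P.inv (ξ ≫ η ≫ ζ)).obj ((P.map (η ≫ ζ)).obj ((P.map ξ).obj ((P.inv ξ).obj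
        ((P.inv (η ≫ ζ)).obj ((P.map ζ).obj ((P.map η).obj ((P.map ξ).obj a)))))))
      from by simp))]
  simp only [Category.assoc, eqToHom_trans, eqToHom_refl, Category.comp_id]
  exact h

-- associativity
theorem sd_assoc (hC : IsGenCocycle C) {x y z w : K} (ξ : x ⟶ y) (η : y ⟶ z) (ζ : z ⟶ w) {a b c d : A}
      (α : a ⟶ b) (β : (P.map ξ).obj b ⟶ c) (γ : (P.map η).obj c ⟶ d) :
      sdComp C (ξ ≫ η) ζ (sdComp C ξ η α β) (eqToHom (by simp) ≫ γ) ≫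
          eqToHom (by simp) =
        sdComp C ξ (η ≫ ζ) α (sdComp C η ζ β γ) := by
  conv_lhs => rw [sdComp]
  simp only [Category.assoc]
  slice_lhs 1 2 => rw [← C.naturality]
  rw [sdComp]
  simp only [Category.assoc]
  slice_lhs 3 4 => rw [C.naturality]
  simp only [Category.assoc]
  slice_lhs 2 3 => rw [C.naturality]
  simp only [Category.assoc]
  slice_lhs 1 2 => rw [cocycle' C hC ξ η ζ a]
  simp only [Category.assoc, map_inv_hom, Functor.map_comp, eqToHom_map,
    eqToHom_trans, eqToHom_trans_assoc]
  conv_rhs => rw [sdComp, sdComp]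
  simp only [Functor.map_comp, Category.assoc]
  slice_rhs 2 3 => rw [← Functor.map_comp, ← Functor.map_comp, C.naturality η ζ ((P.map ξ).map α)]
  simp only [Functor.map_comp, Category.assoc]
  conv_rhs => rw [show C.Ω η ζ ((P.map ξ).obj a) =
      eqToHom (by simp) ≫ (P.map ξ).map ((P.inv ξ).map (C.Ω η ζ ((P.map ξ).obj a))) ≫
        eqToHom (by simp) from by rw [map_inv_hom]; simp]
  conv_rhs => rw [omega_obj_congr C ξ (η ≫ ζ) (P.inv_map_obj ξ a)]
  simp only [Functor.map_comp, eqToHom_map, Category.assoc, eqToHom_trans,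
    eqToHom_trans_assoc, eqToHom_refl, Category.id_comp, Category.comp_id]
  slice_rhs 2 3 => rw [← C.naturality]
  simp only [map_inv_hom, Functor.map_comp, eqToHom_map, Category.assoc, eqToHom_trans,
    eqToHom_trans_assoc, eqToHom_refl, Category.id_comp, Category.comp_id]
  rw [inv_congr_hom P (Category.assoc ξ η ζ) ((P.map ζ).map ((P.map η).map ((P.map ξ).map α))),
    inv_congr_hom P (Category.assoc ξ η ζ) ((P.map ζ).map ((P.map η).map β)),
    inv_congr_hom P (Category.assoc ξ η ζ) ((P.map ζ).map γ)]
  simp only [Category.assoc, eqToHom_trans, eqToHom_trans_assoc, eqToHom_refl,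
    Category.id_comp, Category.comp_id]

/-- For a generalized cocycle `(Λ, Ω)` on `(K, A)`, the data
`A ⋊_{Λ,Ω} K` — objects the pairs `(a,x)`, arrows the pairs `(α,ξ)` with source
`(s(α),s(ξ))`, target `(Λ_ξ(t(α)),t(ξ))`, identities `(1_a,1_x)`, composition
`(α,ξ)·(β,η) = (Ω(ξ,η,s(α))·Λ_{ξη}⁻¹Λ_ηΛ_ξ(α)·Λ_{ξη}⁻¹Λ_η(β), ξη)` and inverse
`(α,ξ)⁻¹ = (Λ_ξ(α⁻¹)·Λ_{ξ⁻¹}⁻¹(Ω(ξ,ξ⁻¹,s(α))⁻¹), ξ⁻¹)` — is a groupoid: the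
composition is associative, the pairs `(1_a,1_x)` are two-sided units, and the
stated inverse is a two-sided inverse.  (The `K`-components compose as in `K`; the
strict identifications of objects of `A` are recorded by `eqToHom`; each law below
is the `A`-component of the corresponding law for pairs.) -/
theorem semidirect_product_is_groupoid
    (P : PreAction K A) (C : Cofactor P) (hC : IsGenCocycle C) :
    -- associativity
    (∀ {x y z w : K} (ξ : x ⟶ y) (η : y ⟶ z) (ζ : z ⟶ w) {a b c d : A}
      (α : a ⟶ b) (β : (P.map ξ).obj b ⟶ c) (γ : (P.map η).obj c ⟶ d),
      sdComp C (ξ ≫ η) ζ (sdComp C ξ η α β) (eqToHom (by simp) ≫ γ) ≫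
          eqToHom (by simp) =
        sdComp C ξ (η ≫ ζ) α (sdComp C η ζ β γ)) ∧
    -- left unit law: (1_a, 1_x) · (α, ξ) = (α, ξ)
    (∀ {x y : K} (ξ : x ⟶ y) {a b : A} (α : a ⟶ b),
      sdComp C (𝟙 x) ξ (𝟙 a) (eqToHom (by simp) ≫ α) = α ≫ eqToHom (by simp)) ∧
    -- right unit law: (α, ξ) · (1_{Λ_ξ(b)}, 1_y) = (α, ξ)
    (∀ {x y : K} (ξ : x ⟶ y) {a b : A} (α : a ⟶ b),
      sdComp C ξ (𝟙 y) α (𝟙 ((P.map ξ).obj b)) = α ≫ eqToHom (by simp)) ∧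
    -- right inverse law: (α, ξ) · (α, ξ)⁻¹ = 1
    (∀ {x y : K} (ξ : x ⟶ y) {a b : A} (α : a ⟶ b),
      sdComp C ξ (Groupoid.inv ξ) α (sdInv C ξ α) =
        eqToHom (by rw [Groupoid.comp_inv]; simp)) ∧
    -- left inverse law: (α, ξ)⁻¹ · (α, ξ) = 1
    (∀ {x y : K} (ξ : x ⟶ y) {a b : A} (α : a ⟶ b),
      sdComp C (Groupoid.inv ξ) ξ (sdInv C ξ α) (eqToHom (by simp) ≫ α) =
        eqToHom (by rw [Groupoid.inv_comp]; simp)) := by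
  refine ⟨?_, ?_, ?_, ?_, ?_⟩
  · intro x y z w ξ η ζ a b c d α β γ
    exact sd_assoc C hC ξ η ζ α β γ
  · intro x y ξ a b α
    exact sd_left_unit C ξ α
  · intro x y ξ a b α
    exact sd_right_unit C ξ α
  · intro x y ξ a b α
    exact sd_right_inv C ξ α
  · intro x y ξ a b α
    exact sd_left_inv C hC ξ α
end

section
/- Let Λ be a pre-action on (K, A) with cofactor Ω, and let Ξ be the associated 3-cochain. Then for each composable triple (ξ, η, ζ) of arrows of K, the family a ↦ Ξ(ξ,η,ζ,a) is a natural transformation 𝟭_A ⟹ 𝟭_A (i.e., for every arrow h : a ⟶ b of A one has Ξ(ξ,η,ζ,a)·h = h·Ξ(ξ,η,ζ,b)); in particular, each Ξ(ξ,η,ζ,a) lies in the center of the automorphism group Hom_A(a,a). -/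
open CategoryTheory
universe v u v' u'
variable {K : Type u} [Groupoid K] {A : Type u'} [Groupoid A]
variable {P : PreAction K A} (C : Cofactor P)


/-- The 3-cochain `Ξ` associated to a pre-action with cofactor `(Λ, Ω)`:
`Ξ(ξ,η,ζ,a) = Ω(ξ,η,a)·Ω(ξη,ζ,Λ_{ξη}⁻¹Λ_ηΛ_ξ(a))·Ω(ξ,ηζ,Λ_ξ⁻¹Λ_{ηζ}⁻¹Λ_ζΛ_ηΛ_ξ(a))⁻¹·Λ_ξ⁻¹(Ω(η,ζ,Λ_ξ(a)))⁻¹`,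
an automorphism of `a` (strict identifications of objects recorded by `eqToHom`). -/
def Xi {P : PreAction K A} (C : Cofactor P) {x y z w : K}
    (ξ : x ⟶ y) (η : y ⟶ z) (ζ : z ⟶ w) (a : A) : a ⟶ a :=
  C.Ω ξ η a ≫
    C.Ω (ξ ≫ η) ζ ((P.inv (ξ ≫ η)).obj ((P.map η).obj ((P.map ξ).obj a))) ≫
    eqToHom (by simp) ≫
    Groupoid.inv (C.Ω ξ (η ≫ ζ)
      ((P.inv ξ).obj ((P.inv (η ≫ ζ)).obj
        ((P.map ζ).obj ((P.map η).obj ((P.map ξ).obj a)))))) ≫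
    Groupoid.inv ((P.inv ξ).map (C.Ω η ζ ((P.map ξ).obj a))) ≫
    eqToHom (by simp)

section AuxXi

theorem map_eqToHom_comm {F G : A ⥤ A} (hFG : F = G) {a b : A}
    (h : a ⟶ b) (pa : F.obj a = G.obj a) (pb : F.obj b = G.obj b) :
    F.map h ≫ eqToHom pb = eqToHom pa ≫ G.map h := by
  subst hFG; simp

theorem nat_inv {x y z : K} (ξ : x ⟶ y) (η : y ⟶ z) {a b : A} (h : a ⟶ b) :
    (P.inv (ξ ≫ η)).map ((P.map η).map ((P.map ξ).map h)) ≫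
      Groupoid.inv (C.Ω ξ η b) = Groupoid.inv (C.Ω ξ η a) ≫ h := by
  rw [Groupoid.inv_eq_inv, Groupoid.inv_eq_inv, IsIso.comp_inv_eq, Category.assoc,
    IsIso.eq_inv_comp]
  exact (C.naturality ξ η h).symm

theorem nat_inv5 {x y z w : K} (ξ : x ⟶ y) (η : y ⟶ z) (ζ : z ⟶ w)
    {a b : A} (h : a ⟶ b) :
    (P.inv ξ).map ((P.inv (η ≫ ζ)).map ((P.map ζ).map ((P.map η).map ((P.map ξ).map h)))) ≫
      Groupoid.inv ((P.inv ξ).map (C.Ω η ζ ((P.map ξ).obj b))) =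
    Groupoid.inv ((P.inv ξ).map (C.Ω η ζ ((P.map ξ).obj a))) ≫
      (P.inv ξ).map ((P.map ξ).map h) := by
  have h0 := congrArg (P.inv ξ).map (nat_inv C η ζ ((P.map ξ).map h))
  simpa [Groupoid.inv_eq_inv, Functor.map_comp, Functor.map_inv] using h0

theorem funct_eq {x y z w : K} (ξ : x ⟶ y) (η : y ⟶ z) (ζ : z ⟶ w) :
    (P.map ξ ⋙ P.map η ⋙ P.inv (ξ ≫ η)) ⋙
      (P.map (ξ ≫ η) ⋙ P.map ζ ⋙ P.inv ((ξ ≫ η) ≫ ζ)) =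
    (P.map ξ ⋙ P.map η ⋙ P.map ζ ⋙ P.inv (η ≫ ζ) ⋙ P.inv ξ) ⋙
      (P.map ξ ⋙ P.map (η ≫ ζ) ⋙ P.inv (ξ ≫ η ≫ ζ)) := by
  calc (P.map ξ ⋙ P.map η ⋙ P.inv (ξ ≫ η)) ⋙
      (P.map (ξ ≫ η) ⋙ P.map ζ ⋙ P.inv ((ξ ≫ η) ≫ ζ))
      = P.map ξ ⋙ P.map η ⋙ (P.inv (ξ ≫ η) ⋙ P.map (ξ ≫ η)) ⋙
          P.map ζ ⋙ P.inv ((ξ ≫ η) ≫ ζ) := rfl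
    _ = P.map ξ ⋙ P.map η ⋙ P.map ζ ⋙ P.inv (ξ ≫ η ≫ ζ) := by
        rw [P.inv_comp, Functor.id_comp, Category.assoc]
    _ = P.map ξ ⋙ P.map η ⋙ P.map ζ ⋙ (P.inv (η ≫ ζ) ⋙
          (P.inv ξ ⋙ P.map ξ) ⋙ P.map (η ≫ ζ)) ⋙ P.inv (ξ ≫ η ≫ ζ) := by
        rw [P.inv_comp, Functor.id_comp, P.inv_comp, Functor.id_comp]
    _ = _ := rfl

theorem step3 {x y z w : K} (ξ : x ⟶ y) (η : y ⟶ z) (ζ : z ⟶ w)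
    {a b : A} (h : a ⟶ b)
    (pa : (P.inv ((ξ ≫ η) ≫ ζ)).obj ((P.map ζ).obj ((P.map (ξ ≫ η)).obj
        ((P.inv (ξ ≫ η)).obj ((P.map η).obj ((P.map ξ).obj a))))) =
      (P.inv (ξ ≫ η ≫ ζ)).obj ((P.map (η ≫ ζ)).obj ((P.map ξ).obj
        ((P.inv ξ).obj ((P.inv (η ≫ ζ)).obj ((P.map ζ).obj ((P.map η).obj ((P.map ξ).obj a))))))))
    (pb : (P.inv ((ξ ≫ η) ≫ ζ)).obj ((P.map ζ).obj ((P.map (ξ ≫ η)).obj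
        ((P.inv (ξ ≫ η)).obj ((P.map η).obj ((P.map ξ).obj b))))) =
      (P.inv (ξ ≫ η ≫ ζ)).obj ((P.map (η ≫ ζ)).obj ((P.map ξ).obj
        ((P.inv ξ).obj ((P.inv (η ≫ ζ)).obj ((P.map ζ).obj ((P.map η).obj ((P.map ξ).obj b)))))))) :
    (P.inv ((ξ ≫ η) ≫ ζ)).map ((P.map ζ).map ((P.map (ξ ≫ η)).map
        ((P.inv (ξ ≫ η)).map ((P.map η).map ((P.map ξ).map h))))) ≫ eqToHom pb =
    eqToHom pa ≫ (P.inv (ξ ≫ η ≫ ζ)).map ((P.map (η ≫ ζ)).map ((P.map ξ).map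
        ((P.inv ξ).map ((P.inv (η ≫ ζ)).map ((P.map ζ).map ((P.map η).map ((P.map ξ).map h))))))) :=
  map_eqToHom_comm (funct_eq ξ η ζ) h pa pb

theorem step6 {x y : K} (ξ : x ⟶ y) {a b : A} (h : a ⟶ b)
    (pa : (P.inv ξ).obj ((P.map ξ).obj a) = a)
    (pb : (P.inv ξ).obj ((P.map ξ).obj b) = b) :
    (P.inv ξ).map ((P.map ξ).map h) ≫ eqToHom pb = eqToHom pa ≫ h :=
  map_eqToHom_comm (P.comp_inv ξ) h pa pb

theorem Xi_nat {x y z w : K} (ξ : x ⟶ y) (η : y ⟶ z) (ζ : z ⟶ w)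
    {a b : A} (h : a ⟶ b) :
    h ≫ Xi C ξ η ζ b = Xi C ξ η ζ a ≫ h := by
  unfold Xi
  rw [reassoc_of% (C.naturality ξ η h),
    reassoc_of% (C.naturality (ξ ≫ η) ζ ((P.inv (ξ ≫ η)).map ((P.map η).map ((P.map ξ).map h)))),
    reassoc_of% (step3 (P := P) ξ η ζ h (by simp) (by simp)),
    reassoc_of% (nat_inv C ξ (η ≫ ζ)
      ((P.inv ξ).map ((P.inv (η ≫ ζ)).map ((P.map ζ).map ((P.map η).map ((P.map ξ).map h)))))),
    reassoc_of% (nat_inv5 C ξ η ζ h),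
    step6 (P := P) ξ h (by simp) (by simp)]
  simp

end AuxXi

/-- For each composable triple `(ξ,η,ζ)`, the family
`a ↦ Ξ(ξ,η,ζ,a)` is a natural transformation `𝟭_A ⟹ 𝟭_A`
(`Ξ(ξ,η,ζ,a)·h = h·Ξ(ξ,η,ζ,b)` for every `h : a ⟶ b`); in particular each
`Ξ(ξ,η,ζ,a)` lies in the center of the automorphism group `Hom_A(a,a)`. -/
theorem Xi_natural (P : PreAction K A) (C : Cofactor P) :
    (∀ {x y z w : K} (ξ : x ⟶ y) (η : y ⟶ z) (ζ : z ⟶ w) {a b : A} (h : a ⟶ b),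
      Xi C ξ η ζ a ≫ h = h ≫ Xi C ξ η ζ b) ∧
    (∀ {x y z w : K} (ξ : x ⟶ y) (η : y ⟶ z) (ζ : z ⟶ w) (a : A) (g : a ⟶ a),
      Xi C ξ η ζ a ≫ g = g ≫ Xi C ξ η ζ a) := by
  constructor
  · intro x y z w ξ η ζ a b h; exact (Xi_nat C ξ η ζ h).symm
  · intro x y z w ξ η ζ a g; exact (Xi_nat C ξ η ζ g).symm
end

section
/- Let Λ be a pre-action on (K, A) with cofactor Ω, and let Ξ be the associated 3-cochain. For composable arrows ξ, η, ζ of K and an object a of A define: Ξ₁(ξ,η,ζ,a) := Ω(ξη,ζ,a)·Ω(ξ,ηζ,Λ_ξ⁻¹Λ_{ηζ}⁻¹Λ_ζΛ_{ξη}(a))⁻¹·Λ_ξ⁻¹(Ω(η,ζ,Λ_η⁻¹Λ_{ξη}(a)))⁻¹·Ω(ξ,η,Λ_ξ⁻¹Λ_η⁻¹Λ_{ξη}(a)); Ξ₂(ξ,η,ζ,a) := Ω(ξ,ηζ,Λ_ξ⁻¹Λ_{ηζ}⁻¹Λ_{ξηζ}(a))⁻¹·Λ_ξ⁻¹(Ω(η,ζ,Λ_η⁻¹Λ_ζ⁻¹Λ_{ξηζ}(a)))⁻¹·Ω(ξ,η,Λ_ξ⁻¹Λ_η⁻¹Λ_ζ⁻¹Λ_{ξηζ}(a))·Ω(ξη,ζ,Λ_{ξη}⁻¹Λ_ζ⁻¹Λ_{ξηζ}(a));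 Ξ₃(ξ,η,ζ,a) := Λ_ξ⁻¹(Ω(η,ζ,Λ_η⁻¹Λ_ζ⁻¹Λ_{ηζ}Λ_ξ(a)))⁻¹·Ω(ξ,η,Λ_ξ⁻¹Λ_η⁻¹Λ_ζ⁻¹Λ_{ηζ}Λ_ξ(a))·Ω(ξη,ζ,Λ_{ξη}⁻¹Λ_ζ⁻¹Λ_{ηζ}Λ_ξ(a))·Ω(ξ,ηζ,a)⁻¹. Then Ξ(ξ,η,ζ,a) = Ξ₁(ξ,η,ζ,a) = Ξ₂(ξ,η,ζ,a) = Ξ₃(ξ,η,ζ,a) for all composable ξ, η, ζ and all objects a. -/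
/-! Ξ(ξ,η,ζ) is the component family of a natural automorphism of `𝟭 A`, a composite of natural
transformations `𝟭 A ⟶ M₁ ⟶ M₂ ⟶ M₃ ⟶ 𝟭 A` built from the four factors of Ξ. Whenever such an
automorphism splits as `f ≫ g` through `M` and `a = M b`, naturality of `f ≫ g` along `g_b` gives
`(f ≫ g)_a = g_b ≫ f_b` up to the identification `a = M b`. Each Ξᵢ is exactly such a rotation,
cutting after the first, second and third factor respectively. -/
open CategoryTheory
universe v u v' u'
variable {K : Type u} [Groupoid K] {A : Type u'} [Groupoid A]
variable {P : PreAction K A} (C : Cofactor P)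


/-- `Ξ₁(ξ,η,ζ,a) = Ω(ξη,ζ,a)·Ω(ξ,ηζ,Λ_ξ⁻¹Λ_{ηζ}⁻¹Λ_ζΛ_{ξη}(a))⁻¹·Λ_ξ⁻¹(Ω(η,ζ,Λ_η⁻¹Λ_{ξη}(a)))⁻¹·Ω(ξ,η,Λ_ξ⁻¹Λ_η⁻¹Λ_{ξη}(a))`. -/
def Xi₁ {P : PreAction K A} (C : Cofactor P) {x y z w : K}
    (ξ : x ⟶ y) (η : y ⟶ z) (ζ : z ⟶ w) (a : A) : a ⟶ a :=
  C.Ω (ξ ≫ η) ζ a ≫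
    eqToHom (by simp) ≫
    Groupoid.inv (C.Ω ξ (η ≫ ζ)
      ((P.inv ξ).obj ((P.inv (η ≫ ζ)).obj
        ((P.map ζ).obj ((P.map (ξ ≫ η)).obj a))))) ≫
    eqToHom (by simp) ≫
    Groupoid.inv ((P.inv ξ).map (C.Ω η ζ
      ((P.inv η).obj ((P.map (ξ ≫ η)).obj a)))) ≫
    C.Ω ξ η ((P.inv ξ).obj ((P.inv η).obj ((P.map (ξ ≫ η)).obj a))) ≫
    eqToHom (by simp)

/-- `Ξ₂(ξ,η,ζ,a) = Ω(ξ,ηζ,Λ_ξ⁻¹Λ_{ηζ}⁻¹Λ_{ξηζ}(a))⁻¹·Λ_ξ⁻¹(Ω(η,ζ,Λ_η⁻¹Λ_ζ⁻¹Λ_{ξηζ}(a)))⁻¹·Ω(ξ,η,Λ_ξ⁻¹Λ_η⁻¹Λ_ζ⁻¹Λ_{ξηζ}(a))·Ω(ξη,ζ,Λ_{ξη}⁻¹Λ_ζ⁻¹Λ_{ξηζ}(a))`. -/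
def Xi₂ {P : PreAction K A} (C : Cofactor P) {x y z w : K}
    (ξ : x ⟶ y) (η : y ⟶ z) (ζ : z ⟶ w) (a : A) : a ⟶ a :=
  eqToHom (by simp) ≫
    Groupoid.inv (C.Ω ξ (η ≫ ζ)
      ((P.inv ξ).obj ((P.inv (η ≫ ζ)).obj ((P.map (ξ ≫ η ≫ ζ)).obj a)))) ≫
    eqToHom (by simp) ≫
    Groupoid.inv ((P.inv ξ).map (C.Ω η ζ
      ((P.inv η).obj ((P.inv ζ).obj ((P.map (ξ ≫ η ≫ ζ)).obj a))))) ≫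
    C.Ω ξ η ((P.inv ξ).obj ((P.inv η).obj ((P.inv ζ).obj ((P.map (ξ ≫ η ≫ ζ)).obj a)))) ≫
    eqToHom (by simp) ≫
    C.Ω (ξ ≫ η) ζ ((P.inv (ξ ≫ η)).obj ((P.inv ζ).obj ((P.map (ξ ≫ η ≫ ζ)).obj a))) ≫
    eqToHom (by simp)

/-- `Ξ₃(ξ,η,ζ,a) = Λ_ξ⁻¹(Ω(η,ζ,Λ_η⁻¹Λ_ζ⁻¹Λ_{ηζ}Λ_ξ(a)))⁻¹·Ω(ξ,η,Λ_ξ⁻¹Λ_η⁻¹Λ_ζ⁻¹Λ_{ηζ}Λ_ξ(a))·Ω(ξη,ζ,Λ_{ξη}⁻¹Λ_ζ⁻¹Λ_{ηζ}Λ_ξ(a))·Ω(ξ,ηζ,a)⁻¹`. -/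
def Xi₃ {P : PreAction K A} (C : Cofactor P) {x y z w : K}
    (ξ : x ⟶ y) (η : y ⟶ z) (ζ : z ⟶ w) (a : A) : a ⟶ a :=
  eqToHom (by simp) ≫
    Groupoid.inv ((P.inv ξ).map (C.Ω η ζ
      ((P.inv η).obj ((P.inv ζ).obj ((P.map (η ≫ ζ)).obj ((P.map ξ).obj a)))))) ≫
    C.Ω ξ η ((P.inv ξ).obj ((P.inv η).obj ((P.inv ζ).obj
      ((P.map (η ≫ ζ)).obj ((P.map ξ).obj a))))) ≫
    eqToHom (by simp) ≫
    C.Ω (ξ ≫ η) ζ ((P.inv (ξ ≫ η)).obj ((P.inv ζ).obj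
      ((P.map (η ≫ ζ)).obj ((P.map ξ).obj a)))) ≫
    eqToHom (by simp) ≫
    Groupoid.inv (C.Ω ξ (η ≫ ζ) a)

instance CategoryTheory.Functor.isGroupoid {C D : Type*} [Category C] [Category D]
    [IsGroupoid D] : IsGroupoid (C ⥤ D) where
  all_isIso τ := NatIso.isIso_of_isIso_app τ

theorem CategoryTheory.NatTrans.comp_app_eq_eqToHom_comp {C : Type*} [Category C] {M : C ⥤ C}
    (f : 𝟭 C ⟶ M) (g : M ⟶ 𝟭 C) {a b : C} (h : a = M.obj b) [Mono (g.app b)] :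
    (f ≫ g).app a = eqToHom h ≫ g.app b ≫ f.app b ≫ eqToHom h.symm := by
  subst h
  rw [← cancel_mono (g.app b)]
  simpa using ((f ≫ g).naturality (g.app b)).symm

namespace PreAction

variable (P) {x y z w : K}

theorem inv_comp_assoc (ξ : x ⟶ y) (G : A ⥤ A) : P.inv ξ ⋙ P.map ξ ⋙ G = G := by
  rw [← Functor.assoc, P.inv_comp, Functor.id_comp]

abbrev comparison (ξ : x ⟶ y) (η : y ⟶ z) : A ⥤ A := P.map ξ ⋙ P.map η ⋙ P.inv (ξ ≫ η)

theorem comparison_comp_comparison (ξ : x ⟶ y) (η : y ⟶ z) (ζ : z ⟶ w) :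
    P.comparison ξ η ⋙ P.comparison (ξ ≫ η) ζ =
      (P.map ξ ⋙ P.comparison η ζ ⋙ P.inv ξ) ⋙ P.comparison ξ (η ≫ ζ) := by
  simp only [comparison, Functor.assoc, inv_comp_assoc, Category.assoc]

end PreAction

namespace Cofactor

variable {x y z w : K}

theorem Ω_congr (ξ : x ⟶ y) (η : y ⟶ z) {a b : A} (h : a = b) :
    C.Ω ξ η a = eqToHom h ≫ C.Ω ξ η b ≫ eqToHom (by rw [h]) := by
  subst h; simp

@[simps]
def natTrans (ξ : x ⟶ y) (η : y ⟶ z) : 𝟭 A ⟶ P.comparison ξ η where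
  app a := C.Ω ξ η a
  naturality _ _ h := by simpa using C.naturality ξ η h

@[simps!]
def whiskeredNatTrans (F : A ⥤ A) (ξ : x ⟶ y) (η : y ⟶ z) : F ⟶ F ⋙ P.comparison ξ η :=
  (Functor.rightUnitor F).inv ≫ Functor.whiskerLeft F (C.natTrans ξ η)

variable (ξ : x ⟶ y) (η : y ⟶ z) (ζ : z ⟶ w)

noncomputable def xiNatTrans : 𝟭 A ⟶ 𝟭 A :=
  C.natTrans ξ η ≫
    C.whiskeredNatTrans _ (ξ ≫ η) ζ ≫
    eqToHom (P.comparison_comp_comparison ξ η ζ) ≫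
    inv (C.whiskeredNatTrans (P.map ξ ⋙ P.comparison η ζ ⋙ P.inv ξ) ξ (η ≫ ζ)) ≫
    inv (Functor.whiskerRight (Functor.whiskerLeft (P.map ξ) (C.natTrans η ζ)) (P.inv ξ)) ≫
    eqToHom (P.comp_inv ξ)

theorem xiNatTrans_app (a : A) : (C.xiNatTrans ξ η ζ).app a = Xi C ξ η ζ a := by
  simp [xiNatTrans, Xi]

theorem Xi_eq_Xi₁ (a : A) : Xi C ξ η ζ a = Xi₁ C ξ η ζ a := by
  set b := (P.inv ξ).obj ((P.inv η).obj ((P.map (ξ ≫ η)).obj a))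
  rw [← xiNatTrans_app, xiNatTrans,
    NatTrans.comp_app_eq_eqToHom_comp _ _ (show a = (P.comparison ξ η).obj b by simp [b])]
  simp only [Xi₁, NatTrans.comp_app, eqToHom_app, whiskeredNatTrans_app,
    Functor.whiskerRight_app, Functor.whiskerLeft_app, NatIso.isIso_inv_app, natTrans_app,
    Groupoid.inv_eq_inv, Functor.comp_obj, Functor.id_obj]
  rw [Ω_congr C (ξ ≫ η) ζ (show a = (P.comparison ξ η).obj b by simp [b]),
    Ω_congr C ξ (η ≫ ζ) (show (P.inv ξ).obj ((P.inv (η ≫ ζ)).obj ((P.map ζ).obj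
      ((P.map (ξ ≫ η)).obj a))) = (P.inv ξ).obj ((P.inv (η ≫ ζ)).obj ((P.map ζ).obj
        ((P.map η).obj ((P.map ξ).obj b)))) by simp [b]),
    Ω_congr C η ζ (show (P.inv η).obj ((P.map (ξ ≫ η)).obj a) = (P.map ξ).obj b by simp [b])]
  simp only [Category.assoc, IsIso.inv_comp, inv_eqToHom, Functor.map_comp, eqToHom_map,
    eqToHom_trans_assoc, eqToHom_refl, Category.id_comp]
  rfl

theorem Xi_eq_Xi₂ (a : A) : Xi C ξ η ζ a = Xi₂ C ξ η ζ a := by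
  set b := (P.inv ξ).obj ((P.inv η).obj ((P.inv ζ).obj ((P.map (ξ ≫ η ≫ ζ)).obj a)))
  -- the functor `M` in the identification `a = M b` fixes where `xiNatTrans` is cut
  rw [← xiNatTrans_app, xiNatTrans, ← Category.assoc,
    NatTrans.comp_app_eq_eqToHom_comp _ _
      (show a = (P.comparison ξ η ⋙ P.comparison (ξ ≫ η) ζ).obj b by simp [b])]
  simp only [Xi₂, NatTrans.comp_app, eqToHom_app, whiskeredNatTrans_app,
    Functor.whiskerRight_app, Functor.whiskerLeft_app, NatIso.isIso_inv_app, natTrans_app,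
    Groupoid.inv_eq_inv, Functor.comp_obj, Functor.id_obj]
  rw [Ω_congr C ξ (η ≫ ζ) (show (P.inv ξ).obj ((P.inv (η ≫ ζ)).obj
      ((P.map (ξ ≫ η ≫ ζ)).obj a)) = (P.inv ξ).obj ((P.inv (η ≫ ζ)).obj ((P.map ζ).obj
        ((P.map η).obj ((P.map ξ).obj b)))) by simp [b]),
    Ω_congr C η ζ (show (P.inv η).obj ((P.inv ζ).obj ((P.map (ξ ≫ η ≫ ζ)).obj a)) =
      (P.map ξ).obj b by simp [b]),
    Ω_congr C (ξ ≫ η) ζ (show (P.inv (ξ ≫ η)).obj ((P.inv ζ).obj ((P.map (ξ ≫ η ≫ ζ)).obj a)) =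
      (P.comparison ξ η).obj b by simp [b])]
  simp only [Category.assoc, IsIso.inv_comp, inv_eqToHom, Functor.map_comp, eqToHom_map,
    eqToHom_trans, eqToHom_trans_assoc, eqToHom_refl, Category.id_comp]
  rfl

theorem Xi_eq_Xi₃ (a : A) : Xi C ξ η ζ a = Xi₃ C ξ η ζ a := by
  set b := (P.inv ξ).obj ((P.inv η).obj ((P.inv ζ).obj ((P.map (η ≫ ζ)).obj ((P.map ξ).obj a))))
  rw [← xiNatTrans_app, xiNatTrans, ← Category.assoc, ← Category.assoc, ← Category.assoc,
    NatTrans.comp_app_eq_eqToHom_comp _ _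
      (show a = (P.map ξ ⋙ P.comparison η ζ ⋙ P.inv ξ).obj b by simp [b])]
  simp only [Xi₃, NatTrans.comp_app, eqToHom_app, whiskeredNatTrans_app,
    Functor.whiskerRight_app, Functor.whiskerLeft_app, NatIso.isIso_inv_app, natTrans_app,
    Groupoid.inv_eq_inv, Functor.comp_obj, Functor.id_obj]
  rw [Ω_congr C η ζ (show (P.inv η).obj ((P.inv ζ).obj ((P.map (η ≫ ζ)).obj ((P.map ξ).obj a))) =
      (P.map ξ).obj b by simp [b]),
    Ω_congr C (ξ ≫ η) ζ (show (P.inv (ξ ≫ η)).obj ((P.inv ζ).obj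
      ((P.map (η ≫ ζ)).obj ((P.map ξ).obj a))) = (P.comparison ξ η).obj b by simp [b]),
    Ω_congr C ξ (η ≫ ζ) (show a = (P.inv ξ).obj ((P.inv (η ≫ ζ)).obj ((P.map ζ).obj
      ((P.map η).obj ((P.map ξ).obj b)))) by simp [b])]
  simp only [Category.assoc, IsIso.inv_comp, inv_eqToHom, Functor.map_comp, eqToHom_map,
    eqToHom_trans_assoc, eqToHom_refl, Category.id_comp]
  rfl

end Cofactor

/-- The cyclic permutations `Ξ₁, Ξ₂, Ξ₃` of the factors of `Ξ`
all agree with `Ξ`. -/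
theorem Xi_cyclic_permutations (P : PreAction K A) (C : Cofactor P) :
    ∀ {x y z w : K} (ξ : x ⟶ y) (η : y ⟶ z) (ζ : z ⟶ w) (a : A),
      Xi C ξ η ζ a = Xi₁ C ξ η ζ a ∧
      Xi C ξ η ζ a = Xi₂ C ξ η ζ a ∧
      Xi C ξ η ζ a = Xi₃ C ξ η ζ a :=
  fun ξ η ζ a => ⟨C.Xi_eq_Xi₁ ξ η ζ a, C.Xi_eq_Xi₂ ξ η ζ a, C.Xi_eq_Xi₃ ξ η ζ a⟩
end

section
/- Let Λ be a pre-action on (K, A) and let Ω and Ω' be two cofactors for Λ, with associated 3-cochains Ξ_Ω and Ξ_{Ω'}. For each composable pair (ξ,η) of arrows of K and each object a of A set ρ(ξ,η)(a) := Ω'(ξ,η,a)·Ω(ξ,η,a)⁻¹, an automorphism of a. Then each family a ↦ ρ(ξ,η)(a) is a natural transformation 𝟭_A ⟹ 𝟭_A, and for all composable ξ, η, ζ and every object a: Ξ_Ω(ξ,η,ζ,a) = Λ_ξ⁻¹(ρ(η,ζ)(Λ_ξ(a)))·ρ(ξη,ζ)(a)⁻¹·ρ(ξ,ηζ)(a)·ρ(ξ,η)(a)⁻¹·Ξ_{Ω'}(ξ,η,ζ,a).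 In other words, Ξ_Ω and Ξ_{Ω'} differ by the coboundary of the 2-cochain ρ. -/
open CategoryTheory
universe v u v' u'
variable {K : Type u} [Groupoid K] {A : Type u'} [Groupoid A]
variable {P : PreAction K A} (C : Cofactor P)


/-- For two cofactors `Ω, Ω'` of the same pre-action `Λ`, the 2-cochain
`ρ(ξ,η)(a) := Ω'(ξ,η,a)·Ω(ξ,η,a)⁻¹`, an automorphism of `a`. -/
def cofDiff {P : PreAction K A} (C C' : Cofactor P) {x y z : K}
    (ξ : x ⟶ y) (η : y ⟶ z) (a : A) : a ⟶ a :=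
  C'.Ω ξ η a ≫ Groupoid.inv (C.Ω ξ η a)


section CoboundaryHelpers
variable {P : PreAction K A} (D D' : Cofactor P)

lemma cofDiff_nat' {x y z : K} (ξ : x ⟶ y) (η : y ⟶ z) {a b : A} (h : a ⟶ b) :
    h ≫ cofDiff D D' ξ η b = cofDiff D D' ξ η a ≫ h := by
  unfold cofDiff
  have h1 := D.naturality ξ η h
  have h2 := D'.naturality ξ η h
  have h3 : (P.inv (ξ ≫ η)).map ((P.map η).map ((P.map ξ).map h)) ≫
      Groupoid.inv (D.Ω ξ η b) = Groupoid.inv (D.Ω ξ η a) ≫ h := by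
    rw [Groupoid.inv_eq_inv, Groupoid.inv_eq_inv, IsIso.comp_inv_eq, Category.assoc,
      IsIso.eq_inv_comp]
    exact h1.symm
  rw [← Category.assoc, h2, Category.assoc, h3, Category.assoc]

lemma cofDiff_nat_assoc {x y z : K} (ξ : x ⟶ y) (η : y ⟶ z) {a b c : A} (h : a ⟶ b)
    (g : b ⟶ c) :
    h ≫ cofDiff D D' ξ η b ≫ g = cofDiff D D' ξ η a ≫ h ≫ g := by
  rw [← Category.assoc, cofDiff_nat', Category.assoc]

lemma cofDiff_nat_inv {x y z : K} (ξ : x ⟶ y) (η : y ⟶ z) {a b : A} (h : a ⟶ b) :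
    h ≫ inv (cofDiff D D' ξ η b) = inv (cofDiff D D' ξ η a) ≫ h := by
  rw [IsIso.comp_inv_eq, Category.assoc, IsIso.eq_inv_comp]
  exact (cofDiff_nat' D D' ξ η h).symm

lemma cofDiff_nat_inv_assoc {x y z : K} (ξ : x ⟶ y) (η : y ⟶ z) {a b c : A} (h : a ⟶ b)
    (g : b ⟶ c) :
    h ≫ inv (cofDiff D D' ξ η b) ≫ g = inv (cofDiff D D' ξ η a) ≫ h ≫ g := by
  rw [← Category.assoc, cofDiff_nat_inv, Category.assoc]

lemma Omega_eq {x y z : K} (ξ : x ⟶ y) (η : y ⟶ z) (a : A) :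
    D.Ω ξ η a = inv (cofDiff D D' ξ η a) ≫ D'.Ω ξ η a := by
  unfold cofDiff
  simp [Groupoid.inv_eq_inv]

lemma invOmega_eq {x y z : K} (ξ : x ⟶ y) (η : y ⟶ z) (a : A) :
    inv (D.Ω ξ η a) = inv (D'.Ω ξ η a) ≫ cofDiff D D' ξ η a := by
  unfold cofDiff
  simp [Groupoid.inv_eq_inv]

lemma sigma_nat {x y y' z : K} (ξ : x ⟶ y) (η : y ⟶ y') (ζ : y' ⟶ z) {a b c : A}
    (h : a ⟶ b) (g : b ⟶ c)
    (pa : a = (P.inv ξ).obj ((P.map ξ).obj a)) (pa' : (P.inv ξ).obj ((P.map ξ).obj a) = a)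
    (pb : b = (P.inv ξ).obj ((P.map ξ).obj b)) (pb' : (P.inv ξ).obj ((P.map ξ).obj b) = b) :
    h ≫ eqToHom pb ≫ (P.inv ξ).map (cofDiff D D' η ζ ((P.map ξ).obj b)) ≫ eqToHom pb' ≫ g
      = eqToHom pa ≫ (P.inv ξ).map (cofDiff D D' η ζ ((P.map ξ).obj a)) ≫ eqToHom pa' ≫
        h ≫ g := by
  have key := Functor.congr_hom (P.comp_inv ξ) h
  simp only [Functor.comp_map, Functor.id_map] at key
  have e1 : h ≫ eqToHom pb = eqToHom pa ≫ (P.inv ξ).map ((P.map ξ).map h) := by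
    rw [key]; simp
  have e2 : (P.inv ξ).map ((P.map ξ).map h) ≫ eqToHom pb' = eqToHom pa' ≫ h := by
    rw [key]; simp
  have nat' : (P.inv ξ).map ((P.map ξ).map h) ≫
        (P.inv ξ).map (cofDiff D D' η ζ ((P.map ξ).obj b))
      = (P.inv ξ).map (cofDiff D D' η ζ ((P.map ξ).obj a)) ≫
        (P.inv ξ).map ((P.map ξ).map h) := by
    rw [← Functor.map_comp, ← Functor.map_comp, cofDiff_nat']
  calc h ≫ eqToHom pb ≫ (P.inv ξ).map (cofDiff D D' η ζ ((P.map ξ).obj b)) ≫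
        eqToHom pb' ≫ g
      = (h ≫ eqToHom pb) ≫ (P.inv ξ).map (cofDiff D D' η ζ ((P.map ξ).obj b)) ≫
        eqToHom pb' ≫ g := by simp
    _ = (eqToHom pa ≫ (P.inv ξ).map ((P.map ξ).map h)) ≫
        (P.inv ξ).map (cofDiff D D' η ζ ((P.map ξ).obj b)) ≫ eqToHom pb' ≫ g := by rw [e1]
    _ = eqToHom pa ≫ ((P.inv ξ).map ((P.map ξ).map h) ≫
        (P.inv ξ).map (cofDiff D D' η ζ ((P.map ξ).obj b))) ≫ eqToHom pb' ≫ g := by simp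
    _ = eqToHom pa ≫ ((P.inv ξ).map (cofDiff D D' η ζ ((P.map ξ).obj a)) ≫
        (P.inv ξ).map ((P.map ξ).map h)) ≫ eqToHom pb' ≫ g := by rw [nat']
    _ = eqToHom pa ≫ (P.inv ξ).map (cofDiff D D' η ζ ((P.map ξ).obj a)) ≫
        ((P.inv ξ).map ((P.map ξ).map h) ≫ eqToHom pb') ≫ g := by simp
    _ = eqToHom pa ≫ (P.inv ξ).map (cofDiff D D' η ζ ((P.map ξ).obj a)) ≫
        (eqToHom pa' ≫ h) ≫ g := by rw [e2]
    _ = eqToHom pa ≫ (P.inv ξ).map (cofDiff D D' η ζ ((P.map ξ).obj a)) ≫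
        eqToHom pa' ≫ h ≫ g := by simp

lemma sigma_nat_last {x y y' z : K} (ξ : x ⟶ y) (η : y ⟶ y') (ζ : y' ⟶ z) {a b : A}
    (h : a ⟶ b)
    (pa : a = (P.inv ξ).obj ((P.map ξ).obj a)) (pa' : (P.inv ξ).obj ((P.map ξ).obj a) = a)
    (pb : b = (P.inv ξ).obj ((P.map ξ).obj b)) (pb' : (P.inv ξ).obj ((P.map ξ).obj b) = b) :
    h ≫ eqToHom pb ≫ (P.inv ξ).map (cofDiff D D' η ζ ((P.map ξ).obj b)) ≫ eqToHom pb'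
      = eqToHom pa ≫ (P.inv ξ).map (cofDiff D D' η ζ ((P.map ξ).obj a)) ≫ eqToHom pa' ≫
        h := by
  simpa using sigma_nat D D' ξ η ζ h (𝟙 b) pa pa' pb pb'

lemma blockify {x y y' z : K} (ξ : x ⟶ y) (η : y ⟶ y') (ζ : y' ⟶ z) (a : A)
    (q : (P.inv ξ).obj ((P.map ξ).obj a) = a) (pa : a = (P.inv ξ).obj ((P.map ξ).obj a))
    (pa' : (P.inv ξ).obj ((P.map ξ).obj a) = a) :
    (P.inv ξ).map (cofDiff D D' η ζ ((P.map ξ).obj a)) ≫ eqToHom q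
      = eqToHom q ≫ eqToHom pa ≫ (P.inv ξ).map (cofDiff D D' η ζ ((P.map ξ).obj a)) ≫
        eqToHom pa' := by
  simp

end CoboundaryHelpers

/-- For two cofactors `Ω, Ω'` of the same pre-action `Λ`, each
family `a ↦ ρ(ξ,η)(a) = Ω'(ξ,η,a)·Ω(ξ,η,a)⁻¹` is a natural transformation
`𝟭_A ⟹ 𝟭_A`, and
`Ξ_Ω(ξ,η,ζ,a) = Λ_ξ⁻¹(ρ(η,ζ)(Λ_ξ(a)))·ρ(ξη,ζ)(a)⁻¹·ρ(ξ,ηζ)(a)·ρ(ξ,η)(a)⁻¹·Ξ_{Ω'}(ξ,η,ζ,a)`: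
the two 3-cochains differ by the coboundary of `ρ`. -/
theorem Xi_diff_is_coboundary (P : PreAction K A) (C C' : Cofactor P) :
    (∀ {x y z : K} (ξ : x ⟶ y) (η : y ⟶ z) {a b : A} (h : a ⟶ b),
      h ≫ cofDiff C C' ξ η b = cofDiff C C' ξ η a ≫ h) ∧
    (∀ {x y z w : K} (ξ : x ⟶ y) (η : y ⟶ z) (ζ : z ⟶ w) (a : A),
      Xi C ξ η ζ a =
        (eqToHom (by simp) ≫
          (P.inv ξ).map (cofDiff C C' η ζ ((P.map ξ).obj a)) ≫
          eqToHom (by simp)) ≫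
        Groupoid.inv (cofDiff C C' (ξ ≫ η) ζ a) ≫
        cofDiff C C' ξ (η ≫ ζ) a ≫
        Groupoid.inv (cofDiff C C' ξ η a) ≫
        Xi C' ξ η ζ a) := by

  constructor
  · intro x y z ξ η a b h
    exact cofDiff_nat' C C' ξ η h
  · intro x y z w ξ η ζ a
    simp only [Xi, Groupoid.inv_eq_inv, Category.assoc]
    rw [Omega_eq C C' ξ η a, Omega_eq C C' (ξ ≫ η) ζ _, invOmega_eq C C' ξ (η ≫ ζ) _,
      Omega_eq C C' η ζ ((P.map ξ).obj a)]
    simp only [Functor.map_comp, IsIso.inv_comp, Functor.map_inv, IsIso.inv_inv,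
      Category.assoc]
    rw [cofDiff_nat_inv_assoc C C' (ξ ≫ η) ζ (C'.Ω ξ η a)]
    rw [cofDiff_nat_assoc C C' ξ (η ≫ ζ)]
    rw [cofDiff_nat_assoc C C' ξ (η ≫ ζ)]
    rw [cofDiff_nat_assoc C C' ξ (η ≫ ζ)]
    rw [cofDiff_nat_assoc C C' ξ (η ≫ ζ)]
    rw [blockify C C' ξ η ζ a (by simp) (by simp) (by simp)]
    rw [← cofDiff_nat_inv_assoc C C' ξ η (inv (cofDiff C C' (ξ ≫ η) ζ a))]
    rw [← cofDiff_nat_inv_assoc C C' ξ η (cofDiff C C' ξ (η ≫ ζ) a)]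
    rw [← sigma_nat C C' ξ η ζ]
    rw [← sigma_nat C C' ξ η ζ]
    rw [← sigma_nat C C' ξ η ζ]
    rw [← sigma_nat C C' ξ η ζ]
    rw [← sigma_nat C C' ξ η ζ]
    rw [← sigma_nat C C' ξ η ζ]
    rw [← sigma_nat C C' ξ η ζ]
    rw [← sigma_nat C C' ξ η ζ]
    rw [← sigma_nat_last C C' ξ η ζ]

    all_goals simp
end

section
/- Let Λ be a pre-action on (K, A) with cofactor Ω, and let Ξ be the associated 3-cochain. Suppose c assigns to each composable pair (ξ,η) of arrows of K a natural transformation c(ξ,η) : 𝟭_A ⟹ 𝟭_A such that for all composable arrows ξ, η, ζ of K and every object a of A: Ξ(ξ,η,ζ,a) = Λ_ξ⁻¹(c(η,ζ)(Λ_ξ(a)))·c(ξη,ζ)(a)⁻¹·c(ξ,ηζ)(a)·c(ξ,η)(a)⁻¹. Define Ω'(ξ,η,a) := c(ξ,η)(a)·Ω(ξ,η,a). Then each family a ↦ Ω'(ξ,η,a) is a natural transformation 𝟭_A ⟹ Λ_ξ ⋙ Λ_η ⋙ Λ_{ξη}⁻¹, and (Λ, Ω') satisfies the generalized cocycle identity: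 Ω'(ξ,η,a)·Ω'(ξη,ζ,Λ_{ξη}⁻¹Λ_ηΛ_ξ(a)) = Λ_ξ⁻¹(Ω'(η,ζ,Λ_ξ(a)))·Ω'(ξ,ηζ,Λ_ξ⁻¹Λ_{ηζ}⁻¹Λ_ζΛ_ηΛ_ξ(a)) for all composable ξ, η, ζ and all objects a. -/
open CategoryTheory
universe v u v' u'
variable {K : Type u} [Groupoid K] {A : Type u'} [Groupoid A]
variable {P : PreAction K A} (C : Cofactor P)


theorem comm_app {A : Type u'} [Groupoid A] (τ : 𝟭 A ⟶ 𝟭 A) {a b : A} (f : a ⟶ b) :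
    f ≫ τ.app b = τ.app a ≫ f := by simpa using τ.naturality f

theorem comm_inv {A : Type u'} [Groupoid A] (τ : 𝟭 A ⟶ 𝟭 A) {a b : A} (f : a ⟶ b) :
    f ≫ Groupoid.inv (τ.app b) = Groupoid.inv (τ.app a) ≫ f := by
  rw [Groupoid.inv_eq_inv, Groupoid.inv_eq_inv, IsIso.comp_inv_eq, Category.assoc,
    comm_app τ f, ← Category.assoc, IsIso.inv_hom_id, Category.id_comp]

/-- If the 3-cochain `Ξ` of `(Λ, Ω)` is the coboundary of a
2-cochain `c` valued in natural transformations `𝟭_A ⟹ 𝟭_A`, then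
`Ω'(ξ,η,a) := c(ξ,η)(a)·Ω(ξ,η,a)` is again a family of natural transformations
`𝟭_A ⟹ Λ_ξ ⋙ Λ_η ⋙ Λ_{ξη}⁻¹` and `(Λ, Ω')` satisfies the generalized cocycle
identity. -/
theorem modified_cofactor_is_genCocycle (P : PreAction K A) (C : Cofactor P)
    (c : ∀ {x y z : K}, (x ⟶ y) → (y ⟶ z) → (𝟭 A ⟶ 𝟭 A))
    (hc : ∀ {x y z w : K} (ξ : x ⟶ y) (η : y ⟶ z) (ζ : z ⟶ w) (a : A),
      Xi C ξ η ζ a =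
        (eqToHom (show a = (P.inv ξ).obj ((P.map ξ).obj a) by simp) ≫
          (P.inv ξ).map ((c η ζ).app ((P.map ξ).obj a)) ≫
          eqToHom (show (P.inv ξ).obj ((P.map ξ).obj a) = a by simp)) ≫
        Groupoid.inv ((c (ξ ≫ η) ζ).app a) ≫
        (c ξ (η ≫ ζ)).app a ≫
        Groupoid.inv ((c ξ η).app a)) :
    -- (1) each family `a ↦ Ω'(ξ,η,a) = c(ξ,η)(a)·Ω(ξ,η,a)` is a natural
    -- transformation `𝟭_A ⟹ Λ_ξ ⋙ Λ_η ⋙ Λ_{ξη}⁻¹`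
    (∀ {x y z : K} (ξ : x ⟶ y) (η : y ⟶ z) {a b : A} (h : a ⟶ b),
      h ≫ ((c ξ η).app b ≫ C.Ω ξ η b) =
        ((c ξ η).app a ≫ C.Ω ξ η a) ≫
          (P.inv (ξ ≫ η)).map ((P.map η).map ((P.map ξ).map h))) ∧
    -- (2) `(Λ, Ω')` satisfies the generalized cocycle identity
    (∀ {x y z w : K} (ξ : x ⟶ y) (η : y ⟶ z) (ζ : z ⟶ w) (a : A),
      ((c ξ η).app a ≫ C.Ω ξ η a) ≫
        ((c (ξ ≫ η) ζ).app ((P.inv (ξ ≫ η)).obj ((P.map η).obj ((P.map ξ).obj a))) ≫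
          C.Ω (ξ ≫ η) ζ ((P.inv (ξ ≫ η)).obj ((P.map η).obj ((P.map ξ).obj a)))) ≫
        eqToHom (by simp) =
      eqToHom (by simp) ≫
        (P.inv ξ).map ((c η ζ).app ((P.map ξ).obj a) ≫ C.Ω η ζ ((P.map ξ).obj a)) ≫
        ((c ξ (η ≫ ζ)).app
            ((P.inv ξ).obj ((P.inv (η ≫ ζ)).obj
              ((P.map ζ).obj ((P.map η).obj ((P.map ξ).obj a))))) ≫
          C.Ω ξ (η ≫ ζ)
            ((P.inv ξ).obj ((P.inv (η ≫ ζ)).obj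
              ((P.map ζ).obj ((P.map η).obj ((P.map ξ).obj a))))))) := by
  constructor
  · intro x y z ξ η a b h
    rw [reassoc_of% comm_app (c ξ η) h, C.naturality ξ η h, Category.assoc]
  · intro x y z w ξ η ζ a
    have key := hc ξ η ζ a
    simp only [Xi, Category.assoc] at key
    simp only [Functor.map_comp, Category.assoc]
    -- move the `c` components to the front on both sides
    rw [reassoc_of% comm_app (c (ξ ≫ η) ζ) (C.Ω ξ η a)]
    rw [reassoc_of% comm_app (c ξ (η ≫ ζ)) ((P.inv ξ).map (C.Ω η ζ ((P.map ξ).obj a)))]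
    rw [reassoc_of% comm_app (c ξ (η ≫ ζ)) ((P.inv ξ).map ((c η ζ).app ((P.map ξ).obj a)))]
    rw [reassoc_of% comm_app (c ξ (η ≫ ζ))
      (eqToHom (show a = (P.inv ξ).obj ((P.map ξ).obj a) by simp))]
    -- expand the trailing eqToHom so that the LHS of `key` appears
    have hE : (eqToHom (by simp) :
        (P.inv ((ξ ≫ η) ≫ ζ)).obj ((P.map ζ).obj ((P.map (ξ ≫ η)).obj
          ((P.inv (ξ ≫ η)).obj ((P.map η).obj ((P.map ξ).obj a))))) ⟶
        (P.inv (ξ ≫ η ≫ ζ)).obj ((P.map (η ≫ ζ)).obj ((P.map ξ).obj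
          ((P.inv ξ).obj ((P.inv (η ≫ ζ)).obj ((P.map ζ).obj ((P.map η).obj
            ((P.map ξ).obj a)))))))) =
        eqToHom (by simp) ≫
        Groupoid.inv (C.Ω ξ (η ≫ ζ)
          ((P.inv ξ).obj ((P.inv (η ≫ ζ)).obj
            ((P.map ζ).obj ((P.map η).obj ((P.map ξ).obj a)))))) ≫
        Groupoid.inv ((P.inv ξ).map (C.Ω η ζ ((P.map ξ).obj a))) ≫
        eqToHom (by simp) ≫
        (eqToHom (show a = (P.inv ξ).obj ((P.map ξ).obj a) by simp)) ≫
        (P.inv ξ).map (C.Ω η ζ ((P.map ξ).obj a)) ≫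
        C.Ω ξ (η ≫ ζ)
          ((P.inv ξ).obj ((P.inv (η ≫ ζ)).obj
            ((P.map ζ).obj ((P.map η).obj ((P.map ξ).obj a))))) := by
      simp
    rw [hE, reassoc_of% key]
    -- now cancel the `c` components
    rw [reassoc_of% comm_inv (c (ξ ≫ η) ζ)
      (eqToHom (show (P.inv ξ).obj ((P.map ξ).obj a) = a by simp))]
    rw [reassoc_of% comm_inv (c (ξ ≫ η) ζ)
      ((P.inv ξ).map ((c η ζ).app ((P.map ξ).obj a)))]
    rw [reassoc_of% comm_inv (c (ξ ≫ η) ζ)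
      (eqToHom (show a = (P.inv ξ).obj ((P.map ξ).obj a) by simp))]
    rw [reassoc_of% Groupoid.comp_inv ((c (ξ ≫ η) ζ).app a)]
    rw [reassoc_of% comm_app (c ξ (η ≫ ζ))
      (eqToHom (show (P.inv ξ).obj ((P.map ξ).obj a) = a by simp))]
    rw [reassoc_of% comm_app (c ξ (η ≫ ζ))
      ((P.inv ξ).map ((c η ζ).app ((P.map ξ).obj a)))]
    rw [reassoc_of% comm_app (c ξ (η ≫ ζ))
      (eqToHom (show a = (P.inv ξ).obj ((P.map ξ).obj a) by simp))]
    rw [reassoc_of% comm_app (c ξ (η ≫ ζ)) ((c ξ η).app a)]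
    rw [reassoc_of% comm_inv (c ξ η)
      (eqToHom (show (P.inv ξ).obj ((P.map ξ).obj a) = a by simp))]
    rw [reassoc_of% comm_inv (c ξ η)
      ((P.inv ξ).map ((c η ζ).app ((P.map ξ).obj a)))]
    rw [reassoc_of% comm_inv (c ξ η)
      (eqToHom (show a = (P.inv ξ).obj ((P.map ξ).obj a) by simp))]
    rw [reassoc_of% Groupoid.comp_inv ((c ξ η).app a)]
    simp
end

section
/- Let (Λ, Ω₀) be a generalized cocycle on (K, A), and let c and c' each assign to every composable pair (ξ,η) of arrows of K a natural transformation 𝟭_A ⟹ 𝟭_A. Then the following are equivalent: (i) there exists a family ρ assigning to each arrow ξ of K a natural transformation ρ(ξ) : Λ_ξ ⟹ Λ_ξ, with ρ(1_x) the identity transformation for every object x of K, such that for all composable ξ, η and all objects a of A: c'(ξ,η)(a)·Ω₀(ξ,η,a) = c(ξ,η)(a)·Ω₀(ξ,η,a)·Λ_{ξη}⁻¹(Λ_η(ρ(ξ)(a))·ρ(η)(Λ_ξ(a)))·Λ_{ξη}⁻¹(ρ(ξη)(Λ_{ξη}⁻¹(Λ_η(Λ_ξ(a)))))⁻¹; (ii)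 there exists a family σ assigning to each arrow ξ of K a natural transformation σ(ξ) : 𝟭_A ⟹ 𝟭_A, with σ(1_x) the identity for every object x, such that for all composable ξ, η and all objects a: c(ξ,η)(a) = c'(ξ,η)(a)·Λ_ξ⁻¹(σ(η)(Λ_ξ(a)))·σ(ξη)(a)⁻¹·σ(ξ)(a). -/
open CategoryTheory
universe v u v' u'
variable {K : Type u} [Groupoid K] {A : Type u'} [Groupoid A]
variable {P : PreAction K A} (C : Cofactor P)

/-!
Natural endotransformations of `𝟭 A` commute (`NatTrans.id_comm`), and since `A` is a groupoid
they are invertible, so they form an abelian group. A family `ρ(ξ) : Λ_ξ ⟹ Λ_ξ` is the same as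
the family `σ(ξ) = Λ_ξ⁻¹ ρ(ξ) : 𝟭 A ⟹ 𝟭 A`. Moving the `ρ`-factors of (i) to the left of `Ω₀`
by naturality of the cofactor turns (i) into `c' = c · δσ`, where
`δσ(ξ, η) = Λ_ξ⁻¹ σ(η) Λ_ξ · σ(ξη)⁻¹ · σ(ξ)`. As `δ(σ⁻¹) = (δσ)⁻¹`, this is (ii) for `s = σ⁻¹`.
-/

instance NatTrans.isIso_of_groupoid {C : Type*} [Category C] {F G : C ⥤ A} (α : F ⟶ G) :
    IsIso α :=
  NatIso.isIso_of_isIso_app α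

namespace PreAction

variable (P)

theorem inv_map_map {x y : K} (ξ : x ⟶ y) {a b : A} (f : a ⟶ b) :
    (P.inv ξ).map ((P.map ξ).map f) = eqToHom (by simp) ≫ f ≫ eqToHom (by simp) := by
  simpa using Functor.congr_hom (P.comp_inv ξ) f

theorem map_inv_map {x y : K} (ξ : x ⟶ y) {a b : A} (f : a ⟶ b) :
    (P.map ξ).map ((P.inv ξ).map f) = eqToHom (by simp) ≫ f ≫ eqToHom (by simp) := by
  simpa using Functor.congr_hom (P.inv_comp ξ) f

/-- `Λ_ξ⁻¹ ρ`, the inverse of whiskering by `Λ_ξ`. -/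
def untwist {x y : K} (ξ : x ⟶ y) (ρ : P.map ξ ⟶ P.map ξ) : 𝟭 A ⟶ 𝟭 A :=
  eqToHom (P.comp_inv ξ).symm ≫ Functor.whiskerRight ρ (P.inv ξ) ≫ eqToHom (P.comp_inv ξ)

theorem untwist_app {x y : K} (ξ : x ⟶ y) (ρ : P.map ξ ⟶ P.map ξ) (a : A) :
    (P.untwist ξ ρ).app a =
      eqToHom (by simp) ≫ (P.inv ξ).map (ρ.app a) ≫ eqToHom (by simp) := by
  simp [untwist, eqToHom_app]

theorem map_untwist_app {x y : K} (ξ : x ⟶ y) (ρ : P.map ξ ⟶ P.map ξ) (a : A) :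
    (P.map ξ).map ((P.untwist ξ ρ).app a) = ρ.app a := by
  simp [untwist_app, eqToHom_map, map_inv_map]

theorem untwist_whiskerRight {x y : K} (ξ : x ⟶ y) (σ : 𝟭 A ⟶ 𝟭 A) :
    P.untwist ξ (Functor.whiskerRight σ (P.map ξ)) = σ := by
  ext a
  simp [untwist_app, inv_map_map]

theorem untwist_id {x y : K} (ξ : x ⟶ y) : P.untwist ξ (𝟙 _) = 𝟙 _ := by
  ext a
  simp [untwist_app]

/-- `Λ_ξ⁻¹ e Λ_ξ`. -/
def conj {x y : K} (ξ : x ⟶ y) (e : 𝟭 A ⟶ 𝟭 A) : 𝟭 A ⟶ 𝟭 A :=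
  P.untwist ξ (Functor.whiskerLeft (P.map ξ) e)

theorem conj_app {x y : K} (ξ : x ⟶ y) (e : 𝟭 A ⟶ 𝟭 A) (a : A) :
    (P.conj ξ e).app a =
      eqToHom (show a = (P.inv ξ).obj ((P.map ξ).obj a) by simp) ≫
        (P.inv ξ).map (e.app ((P.map ξ).obj a)) ≫
        eqToHom (show (P.inv ξ).obj ((P.map ξ).obj a) = a by simp) :=
  P.untwist_app ξ _ a

theorem map_conj_app {x y : K} (ξ : x ⟶ y) (e : 𝟭 A ⟶ 𝟭 A) (a : A) :
    (P.map ξ).map ((P.conj ξ e).app a) = e.app ((P.map ξ).obj a) :=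
  P.map_untwist_app ξ _ a

theorem conj_inv {x y : K} (ξ : x ⟶ y) (e : 𝟭 A ⟶ 𝟭 A) :
    P.conj ξ (CategoryTheory.inv e) = CategoryTheory.inv (P.conj ξ e) := by
  refine IsIso.eq_inv_of_hom_inv_id ?_
  ext a
  simp [conj_app]

noncomputable def coboundary (σ : ∀ {x y : K}, (x ⟶ y) → (𝟭 A ⟶ 𝟭 A)) {x y z : K}
    (ξ : x ⟶ y) (η : y ⟶ z) : 𝟭 A ⟶ 𝟭 A :=
  P.conj ξ (σ η) ≫ CategoryTheory.inv (σ (ξ ≫ η)) ≫ σ ξ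

theorem coboundary_eq (σ : ∀ {x y : K}, (x ⟶ y) → (𝟭 A ⟶ 𝟭 A)) {x y z : K} (ξ : x ⟶ y)
    (η : y ⟶ z) :
    P.coboundary σ ξ η = σ ξ ≫ P.conj ξ (σ η) ≫ CategoryTheory.inv (σ (ξ ≫ η)) := by
  rw [coboundary, NatTrans.id_comm _ (σ ξ), ← Category.assoc, NatTrans.id_comm _ (σ ξ),
    Category.assoc]

theorem eq_comp_coboundary_iff (c c' : 𝟭 A ⟶ 𝟭 A) (σ : ∀ {x y : K}, (x ⟶ y) → (𝟭 A ⟶ 𝟭 A))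
    {x y z : K} (ξ : x ⟶ y) (η : y ⟶ z) :
    c = c' ≫ P.coboundary σ ξ η ↔
      ∀ a : A, c.app a = c'.app a ≫
        (eqToHom (show a = (P.inv ξ).obj ((P.map ξ).obj a) by simp) ≫
          (P.inv ξ).map ((σ η).app ((P.map ξ).obj a)) ≫
          eqToHom (show (P.inv ξ).obj ((P.map ξ).obj a) = a by simp)) ≫
        Groupoid.inv ((σ (ξ ≫ η)).app a) ≫ (σ ξ).app a := by
  rw [NatTrans.ext_iff, funext_iff]
  simp only [coboundary, NatTrans.comp_app, conj_app, NatIso.isIso_inv_app, Groupoid.inv_eq_inv]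

theorem coboundary_inv (σ : ∀ {x y : K}, (x ⟶ y) → (𝟭 A ⟶ 𝟭 A)) {x y z : K} (ξ : x ⟶ y)
    (η : y ⟶ z) :
    P.coboundary (fun ζ ↦ CategoryTheory.inv (σ ζ)) ξ η =
      CategoryTheory.inv (P.coboundary σ ξ η) := by
  simp only [coboundary, conj_inv, IsIso.inv_comp, IsIso.inv_inv]
  rw [NatTrans.id_comm _ (CategoryTheory.inv (P.conj ξ (σ η))), NatTrans.id_comm (σ (ξ ≫ η))]

end PreAction

theorem Cofactor.Ω_comp_twist (ρ : ∀ {x y : K} (ξ : x ⟶ y), P.map ξ ⟶ P.map ξ) {x y z : K}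
    (ξ : x ⟶ y) (η : y ⟶ z) (a : A) :
    C.Ω ξ η a ≫
      (P.inv (ξ ≫ η)).map ((P.map η).map ((ρ ξ).app a) ≫ (ρ η).app ((P.map ξ).obj a)) ≫
      eqToHom (by simp) ≫
      (P.inv (ξ ≫ η)).map (Groupoid.inv ((ρ (ξ ≫ η)).app
        ((P.inv (ξ ≫ η)).obj ((P.map η).obj ((P.map ξ).obj a))))) ≫
      eqToHom (by simp) =
    (P.coboundary (fun ζ ↦ P.untwist ζ (ρ ζ)) ξ η).app a ≫ C.Ω ξ η a := by
  set σ : ∀ {x y : K}, (x ⟶ y) → (𝟭 A ⟶ 𝟭 A) := fun ζ ↦ P.untwist ζ (ρ ζ)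
  have hρ : (P.map η).map ((ρ ξ).app a) ≫ (ρ η).app ((P.map ξ).obj a) =
      (P.map η).map ((P.map ξ).map ((σ ξ).app a ≫ (P.conj ξ (σ η)).app a)) := by
    simp only [Functor.map_comp, P.map_conj_app, P.map_untwist_app, σ]
  have hinv : ∀ b : A,
      eqToHom (by simp) ≫ (P.inv (ξ ≫ η)).map (Groupoid.inv ((ρ (ξ ≫ η)).app b)) ≫
        eqToHom (by simp) = CategoryTheory.inv ((σ (ξ ≫ η)).app b) := by
    intro b
    simp [σ, P.untwist_app, Groupoid.inv_eq_inv]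
  have hΩ : C.Ω ξ η a ≫ CategoryTheory.inv ((σ (ξ ≫ η)).app _) =
      CategoryTheory.inv ((σ (ξ ≫ η)).app a) ≫ C.Ω ξ η a := by
    simpa using (CategoryTheory.inv (σ (ξ ≫ η))).naturality (C.Ω ξ η a)
  rw [hρ, hinv, ← Category.assoc, ← C.naturality]
  dsimp only [Functor.id_obj]
  rw [Category.assoc, hΩ, P.coboundary_eq]
  simp only [NatTrans.comp_app, NatIso.isIso_inv_app, Category.assoc, σ]

theorem Cofactor.comp_eq_comp_twist_iff (c c' : 𝟭 A ⟶ 𝟭 A)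
    (ρ : ∀ {x y : K} (ξ : x ⟶ y), P.map ξ ⟶ P.map ξ) {x y z : K} (ξ : x ⟶ y) (η : y ⟶ z) :
    (∀ a : A, c'.app a ≫ C.Ω ξ η a =
      (c.app a ≫ C.Ω ξ η a) ≫
        (P.inv (ξ ≫ η)).map ((P.map η).map ((ρ ξ).app a) ≫ (ρ η).app ((P.map ξ).obj a)) ≫
        (eqToHom (by simp) ≫
          (P.inv (ξ ≫ η)).map (Groupoid.inv ((ρ (ξ ≫ η)).app
            ((P.inv (ξ ≫ η)).obj ((P.map η).obj ((P.map ξ).obj a))))) ≫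
          eqToHom (by simp))) ↔
    c' = c ≫ P.coboundary (fun ζ ↦ P.untwist ζ (ρ ζ)) ξ η := by
  rw [NatTrans.ext_iff, funext_iff]
  refine forall_congr' fun a ↦ ?_
  rw [Category.assoc, C.Ω_comp_twist ρ ξ η a, ← Category.assoc, cancel_mono, NatTrans.comp_app]

/-- Let `(Λ, Ω₀)` be a generalized cocycle and let `c, c'` assign
natural transformations `𝟭_A ⟹ 𝟭_A` to composable pairs.  Then (i) `c·Ω₀` and
`c'·Ω₀` differ by a conjugation family `ρ(ξ) : Λ_ξ ⟹ Λ_ξ` (with `ρ(1_x) = id`)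
if and only if (ii) `c` and `c'` differ by the coboundary of a family
`σ(ξ) : 𝟭_A ⟹ 𝟭_A` (with `σ(1_x) = id`). -/
theorem equivalent_cocycles_iff_cohomologous (P : PreAction K A) (C₀ : Cofactor P)
    (c c' : ∀ {x y z : K}, (x ⟶ y) → (y ⟶ z) → (𝟭 A ⟶ 𝟭 A)) :
    (∃ ρ : ∀ {x y : K} (ξ : x ⟶ y), (P.map ξ ⟶ P.map ξ),
      (∀ x : K, ρ (𝟙 x) = 𝟙 (P.map (𝟙 x))) ∧
      (∀ {x y z : K} (ξ : x ⟶ y) (η : y ⟶ z) (a : A),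
        (c' ξ η).app a ≫ C₀.Ω ξ η a =
          ((c ξ η).app a ≫ C₀.Ω ξ η a) ≫
          (P.inv (ξ ≫ η)).map
            ((P.map η).map ((ρ ξ).app a) ≫ (ρ η).app ((P.map ξ).obj a)) ≫
          (eqToHom (by simp) ≫
            (P.inv (ξ ≫ η)).map (Groupoid.inv ((ρ (ξ ≫ η)).app
              ((P.inv (ξ ≫ η)).obj ((P.map η).obj ((P.map ξ).obj a))))) ≫
            eqToHom (by simp)))) ↔
    (∃ s : ∀ {x y : K}, (x ⟶ y) → (𝟭 A ⟶ 𝟭 A),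
      (∀ x : K, s (𝟙 x) = 𝟙 (𝟭 A)) ∧
      (∀ {x y z : K} (ξ : x ⟶ y) (η : y ⟶ z) (a : A),
        (c ξ η).app a =
          (c' ξ η).app a ≫
          (eqToHom (show a = (P.inv ξ).obj ((P.map ξ).obj a) by simp) ≫
            (P.inv ξ).map ((s η).app ((P.map ξ).obj a)) ≫
            eqToHom (show (P.inv ξ).obj ((P.map ξ).obj a) = a by simp)) ≫
          Groupoid.inv ((s (ξ ≫ η)).app a) ≫
          (s ξ).app a)) := by
  constructor
  · rintro ⟨ρ, hρ₁, hρ₂⟩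
    refine ⟨fun ξ ↦ inv (P.untwist ξ (ρ ξ)), fun x ↦ by simp [hρ₁, P.untwist_id],
      fun ξ η ↦ ?_⟩
    have h := (C₀.comp_eq_comp_twist_iff _ _ ρ ξ η).1 (hρ₂ ξ η)
    refine (P.eq_comp_coboundary_iff _ _ (fun ζ ↦ inv (P.untwist ζ (ρ ζ))) ξ η).1 ?_
    rw [P.coboundary_inv, h, Category.assoc, IsIso.hom_inv_id, Category.comp_id]
  · rintro ⟨s, hs₁, hs₂⟩
    refine ⟨fun ξ ↦ Functor.whiskerRight (inv (s ξ)) (P.map ξ), fun x ↦ by simp [hs₁]; rfl,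
      fun ξ η ↦ (C₀.comp_eq_comp_twist_iff (c ξ η) (c' ξ η)
        (fun ζ ↦ Functor.whiskerRight (inv (s ζ)) (P.map ζ)) ξ η).2 ?_⟩
    simp only [P.untwist_whiskerRight, P.coboundary_inv, IsIso.eq_comp_inv]
    exact ((P.eq_comp_coboundary_iff _ _ s ξ η).2 (hs₂ ξ η)).symm
end

section
/- Let (Λ, Ω) and (Λ₀, Ω₀) be generalized cocycles on (K, A), and suppose given for each arrow ξ of K a natural transformation ρ(ξ) : Λ_ξ ⟹ Λ₀_ξ, with ρ(1_x) the identity transformation for every object x of K. For composable arrows ξ, η of K and an object a of A define τ(ξ,η)(a) := Λ_{ξη}⁻¹(Λ_η(ρ(ξ)(a))·ρ(η)(Λ₀_ξ(a)))·Λ_{ξη}⁻¹(ρ(ξη)(Λ₀_{ξη}⁻¹(Λ₀_η(Λ₀_ξ(a)))))⁻¹ (an arrow from Λ_{ξη}⁻¹(Λ_η(Λ_ξ(a))) to Λ₀_{ξη}⁻¹(Λ₀_η(Λ₀_ξ(a)))), and set Ω'(ξ,η,a) := Ω(ξ,η,a)·τ(ξ,η)(a). Then: (a) each family a ↦ Ω'(ξ,η,a)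 is a natural transformation 𝟭_A ⟹ Λ₀_ξ ⋙ Λ₀_η ⋙ Λ₀_{ξη}⁻¹ and Ω'(1_x,η), Ω'(ξ,1_y) are identity transformations; (b) each family a ↦ c(ξ,η)(a) := Ω'(ξ,η,a)·Ω₀(ξ,η,a)⁻¹ is a natural transformation 𝟭_A ⟹ 𝟭_A; (c) c is a 2-cocycle: for all composable ξ, η, ζ and every object a, Λ₀_ξ⁻¹(c(η,ζ)(Λ₀_ξ(a)))·c(ξη,ζ)(a)⁻¹·c(ξ,ηζ)(a)·c(ξ,η)(a)⁻¹ = 1_a. -/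
open CategoryTheory
universe v u v' u'
variable {K : Type u} [Groupoid K] {A : Type u'} [Groupoid A]
variable {P : PreAction K A} (C : Cofactor P)


section Statement17

variable {P P₀ : PreAction K A}

/-- Given a family `ρ(ξ) : Λ_ξ ⟹ Λ₀_ξ`, the comparison arrow
`τ(ξ,η)(a) := Λ_{ξη}⁻¹(Λ_η(ρ(ξ)(a))·ρ(η)(Λ₀_ξ(a)))·Λ_{ξη}⁻¹(ρ(ξη)(Λ₀_{ξη}⁻¹(Λ₀_η(Λ₀_ξ(a)))))⁻¹`
from `Λ_{ξη}⁻¹(Λ_η(Λ_ξ(a)))` to `Λ₀_{ξη}⁻¹(Λ₀_η(Λ₀_ξ(a)))` (strict identifications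
recorded by `eqToHom`). -/
def tau17 (P P₀ : PreAction K A)
    (ρ : ∀ {x y : K} (ξ : x ⟶ y), (P.map ξ ⟶ P₀.map ξ))
    {x y z : K} (ξ : x ⟶ y) (η : y ⟶ z) (a : A) :
    (P.inv (ξ ≫ η)).obj ((P.map η).obj ((P.map ξ).obj a)) ⟶
      (P₀.inv (ξ ≫ η)).obj ((P₀.map η).obj ((P₀.map ξ).obj a)) :=
  (P.inv (ξ ≫ η)).map
      ((P.map η).map ((ρ ξ).app a) ≫ (ρ η).app ((P₀.map ξ).obj a)) ≫
    eqToHom (by simp) ≫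
    (P.inv (ξ ≫ η)).map (Groupoid.inv ((ρ (ξ ≫ η)).app
      ((P₀.inv (ξ ≫ η)).obj ((P₀.map η).obj ((P₀.map ξ).obj a))))) ≫
    eqToHom (by simp)

/-- The transported cofactor `Ω'(ξ,η,a) := Ω(ξ,η,a)·τ(ξ,η)(a)`. -/
def omega17 (C : Cofactor P)
    (ρ : ∀ {x y : K} (ξ : x ⟶ y), (P.map ξ ⟶ P₀.map ξ))
    {x y z : K} (ξ : x ⟶ y) (η : y ⟶ z) (a : A) :
    a ⟶ (P₀.inv (ξ ≫ η)).obj ((P₀.map η).obj ((P₀.map ξ).obj a)) :=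
  C.Ω ξ η a ≫ tau17 P P₀ ρ ξ η a

/-- The comparison 2-cochain `c(ξ,η)(a) := Ω'(ξ,η,a)·Ω₀(ξ,η,a)⁻¹`. -/
def cDiff17 (C : Cofactor P) (C₀ : Cofactor P₀)
    (ρ : ∀ {x y : K} (ξ : x ⟶ y), (P.map ξ ⟶ P₀.map ξ))
    {x y z : K} (ξ : x ⟶ y) (η : y ⟶ z) (a : A) : a ⟶ a :=
  omega17 C ρ ξ η a ≫ Groupoid.inv (C₀.Ω ξ η a)

section Aux17

variable (P P₀ : PreAction K A)

theorem aux_app_eq {F G : A ⥤ A} (σ : F ⟶ G) {a b : A} (h : b = a) :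
    σ.app a = eqToHom (by rw [h]) ≫ σ.app b ≫ eqToHom (by rw [h]) := by
  subst h; simp

theorem aux_inv_map_map {x y : K} (ξ : x ⟶ y) {a b : A} (h : a ⟶ b) :
    (P.inv ξ).map ((P.map ξ).map h) = eqToHom (by simp) ≫ h ≫ eqToHom (by simp) := by
  simpa using Functor.congr_hom (P.comp_inv ξ) h

theorem aux_map_inv_map {x y : K} (ξ : x ⟶ y) {a b : A} (h : a ⟶ b) :
    (P.map ξ).map ((P.inv ξ).map h) = eqToHom (by simp) ≫ h ≫ eqToHom (by simp) := by
  simpa using Functor.congr_hom (P.inv_comp ξ) h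

variable (ρ : ∀ {x y : K} (ξ : x ⟶ y), (P.map ξ ⟶ P₀.map ξ))

/-- The inverse-transport `σ_ξ(c) : Λ_ξ⁻¹(c) ⟶ Λ₀_ξ⁻¹(c)` of `ρ`. -/
def sig17 {x y : K} (ξ : x ⟶ y) (c : A) :
    (P.inv ξ).obj c ⟶ (P₀.inv ξ).obj c :=
  eqToHom (by simp) ≫
    (P.inv ξ).map (Groupoid.inv ((ρ ξ).app ((P₀.inv ξ).obj c))) ≫ eqToHom (by simp)

theorem rho_inv_naturality {x y : K} (ξ : x ⟶ y) {a b : A} (h : a ⟶ b) :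
    Groupoid.inv ((ρ ξ).app a) ≫ (P.map ξ).map h =
      (P₀.map ξ).map h ≫ Groupoid.inv ((ρ ξ).app b) := by
  rw [Groupoid.inv_eq_inv, Groupoid.inv_eq_inv, IsIso.inv_comp_eq, ← Category.assoc,
    IsIso.eq_comp_inv]
  exact (ρ ξ).naturality h

theorem sig17_naturality {x y : K} (ξ : x ⟶ y) {c c' : A} (h : c ⟶ c') :
    (P.inv ξ).map h ≫ sig17 P P₀ ρ ξ c' = sig17 P P₀ ρ ξ c ≫ (P₀.inv ξ).map h := by
  have hh : h = eqToHom (by simp) ≫ (P₀.map ξ).map ((P₀.inv ξ).map h) ≫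
      eqToHom (by simp) := by
    rw [aux_map_inv_map]; simp
  conv_lhs => rw [hh]
  have h2 := rho_inv_naturality P P₀ ρ ξ ((P₀.inv ξ).map h)
  simp only [sig17, Functor.map_comp, eqToHom_map, Category.assoc, eqToHom_trans,
    eqToHom_refl, Category.id_comp, Category.comp_id, eqToHom_trans_assoc]
  rw [← Functor.map_comp_assoc, ← h2, Functor.map_comp_assoc, aux_inv_map_map]
  simp

theorem sig17_r {x y : K} (ξ : x ⟶ y) (a : A) :
    (P.inv ξ).map ((ρ ξ).app a) ≫ sig17 P P₀ ρ ξ ((P₀.map ξ).obj a) =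
      eqToHom (by simp) := by
  simp only [sig17]
  rw [aux_app_eq (ρ ξ) ((P₀.inv_map_obj ξ a).symm)]
  simp only [Groupoid.inv_eq_inv, IsIso.inv_comp, inv_eqToHom, Functor.map_comp,
    eqToHom_map, Category.assoc, eqToHom_trans, eqToHom_refl, Category.id_comp,
    eqToHom_trans_assoc]
  rw [← Functor.map_comp_assoc, ← Groupoid.inv_eq_inv, Groupoid.comp_inv]
  simp

theorem sig17_r' {x y : K} (ξ : x ⟶ y) (a : A) :
    sig17 P P₀ ρ ξ ((P.map ξ).obj a) ≫ (P₀.inv ξ).map ((ρ ξ).app a) =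
      eqToHom (by simp) := by
  rw [← sig17_naturality, sig17_r]

theorem rho_arr_congr {x y : K} {ξ ξ' : x ⟶ y} (h : ξ = ξ') (b : A) :
    (ρ ξ).app b = eqToHom (by rw [h]) ≫ (ρ ξ').app b ≫ eqToHom (by rw [h]) := by
  subst h; simp

theorem tau17_eq {x y z : K} (ξ : x ⟶ y) (η : y ⟶ z) (a : A) :
    tau17 P P₀ ρ ξ η a =
      (P.inv (ξ ≫ η)).map
          ((P.map η).map ((ρ ξ).app a) ≫ (ρ η).app ((P₀.map ξ).obj a)) ≫
        sig17 P P₀ ρ (ξ ≫ η) ((P₀.map η).obj ((P₀.map ξ).obj a)) := by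
  simp [tau17, sig17]

theorem tau17_naturality {x y z : K} (ξ : x ⟶ y) (η : y ⟶ z) {a b : A} (h : a ⟶ b) :
    (P.inv (ξ ≫ η)).map ((P.map η).map ((P.map ξ).map h)) ≫ tau17 P P₀ ρ ξ η b =
      tau17 P P₀ ρ ξ η a ≫ (P₀.inv (ξ ≫ η)).map ((P₀.map η).map ((P₀.map ξ).map h)) := by
  have h1 := (ρ ξ).naturality h
  have h2 := (ρ η).naturality ((P₀.map ξ).map h)
  have key : (P.map η).map ((P.map ξ).map h) ≫ (P.map η).map ((ρ ξ).app b) ≫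
        (ρ η).app ((P₀.map ξ).obj b) =
      ((P.map η).map ((ρ ξ).app a) ≫ (ρ η).app ((P₀.map ξ).obj a)) ≫
        (P₀.map η).map ((P₀.map ξ).map h) := by
    rw [← Functor.map_comp_assoc, h1, Functor.map_comp_assoc, h2, Category.assoc]
  rw [tau17_eq, tau17_eq, ← Functor.map_comp_assoc, key, Functor.map_comp, Category.assoc,
    sig17_naturality, ← Category.assoc]

theorem sig17_arr_congr {x y : K} {ξ ξ' : x ⟶ y} (h : ξ = ξ') (c : A) :
    sig17 P P₀ ρ ξ c = eqToHom (by rw [h]) ≫ sig17 P P₀ ρ ξ' c ≫ eqToHom (by rw [h]) := by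
  subst h; simp

theorem sig17_obj_congr {x y : K} (ξ : x ⟶ y) {c c' : A} (h : c = c') :
    sig17 P P₀ ρ ξ c = eqToHom (by rw [h]) ≫ sig17 P P₀ ρ ξ c' ≫ eqToHom (by rw [h]) := by
  subst h; simp

theorem tau17_id_left (hρ : ∀ x : K, ρ (𝟙 x) = eqToHom (by rw [P.map_id, P₀.map_id]))
    {x y : K} (η : x ⟶ y) (a : A) :
    tau17 P P₀ ρ (𝟙 x) η a = eqToHom (by rw [Category.id_comp]; simp) := by
  rw [tau17_eq, hρ]
  rw [aux_app_eq (ρ η) ((P₀.map_id_obj x a).symm)]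
  rw [sig17_arr_congr P P₀ ρ (Category.id_comp η)]
  rw [sig17_obj_congr P P₀ ρ η
    (show (P₀.map η).obj ((P₀.map (𝟙 x)).obj a) = (P₀.map η).obj a by simp)]
  rw [Functor.congr_hom (show P.inv (𝟙 x ≫ η) = P.inv η by rw [Category.id_comp])]
  simp only [eqToHom_app, eqToHom_map, Functor.map_comp, Category.assoc, eqToHom_trans,
    eqToHom_trans_assoc, eqToHom_refl, Category.id_comp]
  rw [← Category.assoc ((P.inv η).map _), sig17_r]
  simp

theorem tau17_id_right (hρ : ∀ x : K, ρ (𝟙 x) = eqToHom (by rw [P.map_id, P₀.map_id]))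
    {x y : K} (ξ : x ⟶ y) (a : A) :
    tau17 P P₀ ρ ξ (𝟙 y) a = eqToHom (by rw [Category.comp_id]; simp) := by
  rw [tau17_eq, hρ]
  rw [Functor.congr_hom (P.map_id y) ((ρ ξ).app a)]
  rw [sig17_arr_congr P P₀ ρ (Category.comp_id ξ)]
  rw [sig17_obj_congr P P₀ ρ ξ
    (show (P₀.map (𝟙 y)).obj ((P₀.map ξ).obj a) = (P₀.map ξ).obj a by simp)]
  rw [Functor.congr_hom (show P.inv (ξ ≫ 𝟙 y) = P.inv ξ by rw [Category.comp_id])]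
  simp only [eqToHom_app, eqToHom_map, Functor.map_comp, Category.assoc, eqToHom_trans,
    eqToHom_trans_assoc, eqToHom_refl, Category.id_comp, Functor.id_map]
  rw [← Category.assoc ((P.inv ξ).map _), sig17_r]
  simp

variable (C : Cofactor P) (C₀ : Cofactor P₀)

theorem omega17_naturality {x y z : K} (ξ : x ⟶ y) (η : y ⟶ z) {a b : A} (h : a ⟶ b) :
    h ≫ omega17 C ρ ξ η b =
      omega17 C ρ ξ η a ≫ (P₀.inv (ξ ≫ η)).map ((P₀.map η).map ((P₀.map ξ).map h)) := by
  simp only [omega17]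
  rw [← Category.assoc, C.naturality, Category.assoc, tau17_naturality, ← Category.assoc]

theorem omega17_id_left (hρ : ∀ x : K, ρ (𝟙 x) = eqToHom (by rw [P.map_id, P₀.map_id]))
    {x y : K} (η : x ⟶ y) (a : A) :
    omega17 C ρ (𝟙 x) η a = eqToHom (P₀.cof_obj_id_left η a) := by
  simp only [omega17]
  rw [C.id_left, tau17_id_left P P₀ ρ hρ, eqToHom_trans]

theorem omega17_id_right (hρ : ∀ x : K, ρ (𝟙 x) = eqToHom (by rw [P.map_id, P₀.map_id]))
    {x y : K} (ξ : x ⟶ y) (a : A) :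
    omega17 C ρ ξ (𝟙 y) a = eqToHom (P₀.cof_obj_id_right ξ a) := by
  simp only [omega17]
  rw [C.id_right, tau17_id_right P P₀ ρ hρ, eqToHom_trans]

/-- The transported cofactor, as a `Cofactor P₀`. -/
def cof17 (hρ : ∀ x : K, ρ (𝟙 x) = eqToHom (by rw [P.map_id, P₀.map_id])) : Cofactor P₀ where
  Ω := omega17 C ρ
  naturality := @fun x y z ξ η a b h => omega17_naturality P P₀ ρ C ξ η h
  id_left := @fun x y η a => omega17_id_left P P₀ ρ C hρ η a
  id_right := @fun x y ξ a => omega17_id_right P P₀ ρ C hρ ξ a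

theorem tau17_cocycle {x y z w : K} (ξ : x ⟶ y) (η : y ⟶ z) (ζ : z ⟶ w) (a : A) :
    (P.inv ((ξ ≫ η) ≫ ζ)).map ((P.map ζ).map ((P.map (ξ ≫ η)).map (tau17 P P₀ ρ ξ η a))) ≫
      tau17 P P₀ ρ (ξ ≫ η) ζ ((P₀.inv (ξ ≫ η)).obj ((P₀.map η).obj ((P₀.map ξ).obj a))) ≫
      eqToHom (by simp) =
    eqToHom (by simp) ≫
      (P.inv (ξ ≫ η ≫ ζ)).map ((P.map (η ≫ ζ)).map ((P.map ξ).map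
        (sig17 P P₀ ρ ξ ((P.inv (η ≫ ζ)).obj ((P.map ζ).obj ((P.map η).obj
          ((P.map ξ).obj a))))))) ≫
      (P.inv (ξ ≫ η ≫ ζ)).map ((P.map (η ≫ ζ)).map ((P.map ξ).map
        ((P₀.inv ξ).map ((P.inv (η ≫ ζ)).map ((P.map ζ).map ((P.map η).map
          ((ρ ξ).app a))))))) ≫
      (P.inv (ξ ≫ η ≫ ζ)).map ((P.map (η ≫ ζ)).map ((P.map ξ).map
        ((P₀.inv ξ).map (tau17 P P₀ ρ η ζ ((P₀.map ξ).obj a))))) ≫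
      tau17 P P₀ ρ ξ (η ≫ ζ)
        ((P₀.inv ξ).obj ((P₀.inv (η ≫ ζ)).obj ((P₀.map ζ).obj ((P₀.map η).obj
          ((P₀.map ξ).obj a))))) := by
  have hs0 : sig17 P P₀ ρ ξ
        ((P.inv (η ≫ ζ)).obj ((P.map ζ).obj ((P.map η).obj ((P.map ξ).obj a)))) ≫
      (P₀.inv ξ).map ((P.inv (η ≫ ζ)).map ((P.map ζ).map ((P.map η).map ((ρ ξ).app a)))) ≫
      (P₀.inv ξ).map (tau17 P P₀ ρ η ζ ((P₀.map ξ).obj a)) =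
      (P.inv ξ).map ((P.inv (η ≫ ζ)).map ((P.map ζ).map ((P.map η).map ((ρ ξ).app a)))) ≫
      (P.inv ξ).map (tau17 P P₀ ρ η ζ ((P₀.map ξ).obj a)) ≫
      sig17 P P₀ ρ ξ
        ((P₀.inv (η ≫ ζ)).obj ((P₀.map ζ).obj ((P₀.map η).obj ((P₀.map ξ).obj a)))) := by
    rw [← reassoc_of% (sig17_naturality P P₀ ρ ξ
      ((P.inv (η ≫ ζ)).map ((P.map ζ).map ((P.map η).map ((ρ ξ).app a)))))]
    rw [← sig17_naturality]
  conv_rhs => rw [← Functor.map_comp_assoc, ← Functor.map_comp_assoc]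
  conv_rhs => simp only [← Functor.map_comp]
  simp only [Category.assoc]
  rw [hs0]
  simp only [tau17_eq, sig17, Functor.map_comp, Category.assoc, eqToHom_map,
    aux_map_inv_map, eqToHom_trans, eqToHom_refl, Category.id_comp, Category.comp_id,
    eqToHom_trans_assoc]
  -- cancellation of the r_{ξ≫η} pair on the LHS
  have hc1 : (P.inv ((ξ ≫ η) ≫ ζ)).map ((P.map ζ).map (Groupoid.inv ((ρ (ξ ≫ η)).app
        ((P₀.inv (ξ ≫ η)).obj ((P₀.map η).obj ((P₀.map ξ).obj a)))))) ≫
      (P.inv ((ξ ≫ η) ≫ ζ)).map ((P.map ζ).map ((ρ (ξ ≫ η)).app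
        ((P₀.inv (ξ ≫ η)).obj ((P₀.map η).obj ((P₀.map ξ).obj a))))) = 𝟙 _ := by
    rw [← Functor.map_comp, ← Functor.map_comp, Groupoid.inv_comp]; simp
  rw [reassoc_of% hc1]
  -- cancellation of the r_ξ pair on the RHS
  have hc2 : (P.inv (ξ ≫ η ≫ ζ)).map ((P.map (η ≫ ζ)).map (Groupoid.inv ((ρ ξ).app
        ((P₀.inv ξ).obj ((P₀.inv (η ≫ ζ)).obj ((P₀.map ζ).obj ((P₀.map η).obj
          ((P₀.map ξ).obj a)))))))) ≫
      (P.inv (ξ ≫ η ≫ ζ)).map ((P.map (η ≫ ζ)).map ((ρ ξ).app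
        ((P₀.inv ξ).obj ((P₀.inv (η ≫ ζ)).obj ((P₀.map ζ).obj ((P₀.map η).obj
          ((P₀.map ξ).obj a))))))) = 𝟙 _ := by
    rw [← Functor.map_comp, ← Functor.map_comp, Groupoid.inv_comp]; simp
  rw [reassoc_of% hc2]
  -- object transports
  rw [aux_app_eq (ρ ζ) (show ((P₀.map η).obj ((P₀.map ξ).obj a)) =
    (P₀.map (ξ ≫ η)).obj ((P₀.inv (ξ ≫ η)).obj ((P₀.map η).obj ((P₀.map ξ).obj a)))
      by simp)]
  rw [aux_app_eq (ρ (η ≫ ζ)) (show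
    ((P₀.inv (η ≫ ζ)).obj ((P₀.map ζ).obj ((P₀.map η).obj ((P₀.map ξ).obj a)))) =
    (P₀.map ξ).obj ((P₀.inv ξ).obj ((P₀.inv (η ≫ ζ)).obj ((P₀.map ζ).obj ((P₀.map η).obj
      ((P₀.map ξ).obj a))))) by simp)]
  simp only [Functor.map_comp, eqToHom_map, Category.assoc, eqToHom_trans, eqToHom_refl,
    Category.id_comp, Category.comp_id, eqToHom_trans_assoc]
  -- cancellation of the r_{η≫ζ} pair on the RHS
  have hc3 : (P.inv (ξ ≫ η ≫ ζ)).map (Groupoid.inv ((ρ (η ≫ ζ)).app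
        ((P₀.inv (η ≫ ζ)).obj ((P₀.map ζ).obj ((P₀.map η).obj ((P₀.map ξ).obj a)))))) ≫
      (P.inv (ξ ≫ η ≫ ζ)).map ((ρ (η ≫ ζ)).app
        ((P₀.inv (η ≫ ζ)).obj ((P₀.map ζ).obj ((P₀.map η).obj ((P₀.map ξ).obj a))))) =
      𝟙 _ := by
    rw [← Functor.map_comp, Groupoid.inv_comp]; simp
  rw [reassoc_of% hc3]
  rw [rho_arr_congr P P₀ ρ (Category.assoc ξ η ζ)]
  rw [aux_app_eq (ρ (ξ ≫ η ≫ ζ)) (show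
    (P₀.inv (ξ ≫ η ≫ ζ)).obj ((P₀.map ζ).obj ((P₀.map η).obj ((P₀.map ξ).obj a))) =
    (P₀.inv ((ξ ≫ η) ≫ ζ)).obj ((P₀.map ζ).obj ((P₀.map (ξ ≫ η)).obj ((P₀.inv (ξ ≫ η)).obj
      ((P₀.map η).obj ((P₀.map ξ).obj a))))) by simp)]
  rw [aux_app_eq (ρ (ξ ≫ η ≫ ζ)) (show
    (P₀.inv (ξ ≫ η ≫ ζ)).obj ((P₀.map ζ).obj ((P₀.map η).obj ((P₀.map ξ).obj a))) =
    (P₀.inv (ξ ≫ η ≫ ζ)).obj ((P₀.map (η ≫ ζ)).obj ((P₀.map ξ).obj ((P₀.inv ξ).obj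
      ((P₀.inv (η ≫ ζ)).obj ((P₀.map ζ).obj ((P₀.map η).obj ((P₀.map ξ).obj a)))))))
    by simp)]
  simp only [Functor.congr_hom (show P.inv ((ξ ≫ η) ≫ ζ) = P.inv (ξ ≫ η ≫ ζ)
    by rw [Category.assoc])]
  simp only [Groupoid.inv_eq_inv, IsIso.inv_comp, inv_eqToHom, Functor.map_comp,
    eqToHom_map, Category.assoc, eqToHom_trans, eqToHom_refl, Category.id_comp,
    Category.comp_id, eqToHom_trans_assoc]

theorem cof17_cocycle (hρ : ∀ x : K, ρ (𝟙 x) = eqToHom (by rw [P.map_id, P₀.map_id]))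
    (hC : IsGenCocycle C) : IsGenCocycle (cof17 P P₀ ρ C hρ) := by
  intro x y z w ξ η ζ a
  simp only [cof17, omega17, Functor.map_comp, Category.assoc]
  rw [reassoc_of% (C.naturality (ξ ≫ η) ζ (tau17 P P₀ ρ ξ η a))]
  have h6 : C.Ω η ζ ((P₀.map ξ).obj a) =
      Groupoid.inv ((ρ ξ).app a) ≫ C.Ω η ζ ((P.map ξ).obj a) ≫
        (P.inv (η ≫ ζ)).map ((P.map ζ).map ((P.map η).map ((ρ ξ).app a))) := by
    rw [← C.naturality, ← Category.assoc, Groupoid.inv_comp, Category.id_comp]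
  rw [h6]
  simp only [Functor.map_comp, Category.assoc]
  have hB : eqToHom (show a = (P₀.inv ξ).obj ((P₀.map ξ).obj a) by simp) ≫
      (P₀.inv ξ).map (Groupoid.inv ((ρ ξ).app a)) =
      eqToHom (by simp) ≫ sig17 P P₀ ρ ξ ((P.map ξ).obj a) := by
    rw [← cancel_mono ((P₀.inv ξ).map ((ρ ξ).app a))]
    rw [Category.assoc, Category.assoc, sig17_r', ← Functor.map_comp, Groupoid.inv_comp,
      CategoryTheory.Functor.map_id, Category.comp_id, eqToHom_trans]
  rw [reassoc_of% hB]
  rw [← reassoc_of% (sig17_naturality P P₀ ρ ξ (C.Ω η ζ ((P.map ξ).obj a)))]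
  rw [reassoc_of% (C.naturality ξ (η ≫ ζ)
    ((P₀.inv ξ).map (tau17 P P₀ ρ η ζ ((P₀.map ξ).obj a))))]
  rw [reassoc_of% (C.naturality ξ (η ≫ ζ)
    ((P₀.inv ξ).map ((P.inv (η ≫ ζ)).map ((P.map ζ).map ((P.map η).map ((ρ ξ).app a))))))]
  rw [reassoc_of% (C.naturality ξ (η ≫ ζ)
    (sig17 P P₀ ρ ξ ((P.inv (η ≫ ζ)).obj ((P.map ζ).obj ((P.map η).obj
      ((P.map ξ).obj a))))))]
  rw [← reassoc_of% (hC ξ η ζ a)]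
  rw [cancel_epi, cancel_epi]
  exact tau17_cocycle P P₀ ρ ξ η ζ a

theorem cDiff17_naturality {x y z : K} (ξ : x ⟶ y) (η : y ⟶ z) {a b : A} (h : a ⟶ b) :
    h ≫ cDiff17 C C₀ ρ ξ η b = cDiff17 C C₀ ρ ξ η a ≫ h := by
  have hM : (P₀.inv (ξ ≫ η)).map ((P₀.map η).map ((P₀.map ξ).map h)) =
      Groupoid.inv (C₀.Ω ξ η a) ≫ h ≫ C₀.Ω ξ η b := by
    rw [C₀.naturality, ← Category.assoc, Groupoid.inv_comp, Category.id_comp]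
  simp only [cDiff17]
  rw [← Category.assoc, omega17_naturality, Category.assoc, hM]
  simp [Groupoid.comp_inv]

theorem omega17_eq_cDiff_comp {x y z : K} (ξ : x ⟶ y) (η : y ⟶ z) (a : A) :
    omega17 C ρ ξ η a = cDiff17 C C₀ ρ ξ η a ≫ C₀.Ω ξ η a := by
  simp [cDiff17, Groupoid.inv_comp]

theorem cDiff17_master (hρ : ∀ x : K, ρ (𝟙 x) = eqToHom (by rw [P.map_id, P₀.map_id]))
    (hC : IsGenCocycle C) (hC₀ : IsGenCocycle C₀)
    {x y z w : K} (ξ : x ⟶ y) (η : y ⟶ z) (ζ : z ⟶ w) (a : A) :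
    cDiff17 C C₀ ρ ξ η a ≫ cDiff17 C C₀ ρ (ξ ≫ η) ζ a =
      cDiff17 C C₀ ρ ξ (η ≫ ζ) a ≫
        eqToHom (show a = (P₀.inv ξ).obj ((P₀.map ξ).obj a) by simp) ≫
        (P₀.inv ξ).map (cDiff17 C C₀ ρ η ζ ((P₀.map ξ).obj a)) ≫
        eqToHom (show (P₀.inv ξ).obj ((P₀.map ξ).obj a) = a by simp) := by
  have h1 := cof17_cocycle P P₀ ρ C hρ hC ξ η ζ a
  have h0 := hC₀ ξ η ζ a
  simp only [cof17] at h1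
  simp only [omega17_eq_cDiff_comp P P₀ ρ C C₀, Category.assoc, Functor.map_comp] at h1
  rw [reassoc_of% (cDiff17_naturality P P₀ ρ C C₀ (ξ ≫ η) ζ (C₀.Ω ξ η a))] at h1
  rw [h0] at h1
  rw [reassoc_of% (cDiff17_naturality P P₀ ρ C C₀ ξ (η ≫ ζ)
    ((P₀.inv ξ).map (C₀.Ω η ζ ((P₀.map ξ).obj a))))] at h1
  rw [reassoc_of% (cDiff17_naturality P P₀ ρ C C₀ ξ (η ≫ ζ)
    ((P₀.inv ξ).map (cDiff17 C C₀ ρ η ζ ((P₀.map ξ).obj a))))] at h1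
  rw [reassoc_of% (cDiff17_naturality P P₀ ρ C C₀ ξ (η ≫ ζ)
    (eqToHom (show a = (P₀.inv ξ).obj ((P₀.map ξ).obj a) by simp)))] at h1
  rw [← cancel_mono (eqToHom (show a = (P₀.inv ξ).obj ((P₀.map ξ).obj a) by simp))]
  rw [← cancel_mono ((P₀.inv ξ).map (C₀.Ω η ζ ((P₀.map ξ).obj a)))]
  rw [← cancel_mono (C₀.Ω ξ (η ≫ ζ)
    ((P₀.inv ξ).obj ((P₀.inv (η ≫ ζ)).obj ((P₀.map ζ).obj ((P₀.map η).obj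
      ((P₀.map ξ).obj a))))))]
  simp only [Category.assoc, eqToHom_trans, eqToHom_refl, Category.comp_id, Category.id_comp]
  exact h1

end Aux17

/-- Let `(Λ, Ω)` and `(Λ₀, Ω₀)` be generalized cocycles on
`(K, A)` and `ρ(ξ) : Λ_ξ ⟹ Λ₀_ξ` a family of natural transformations with
`ρ(1_x)` the identity.  Then:
(a) `Ω'(ξ,η) = Ω(ξ,η)·τ(ξ,η)` is a family of natural transformations
`𝟭_A ⟹ Λ₀_ξ ⋙ Λ₀_η ⋙ Λ₀_{ξη}⁻¹` which is the identity whenever `ξ` or `η` is an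
identity arrow;
(b) `c(ξ,η) := Ω'(ξ,η)·Ω₀(ξ,η)⁻¹` is a family of natural transformations
`𝟭_A ⟹ 𝟭_A`;
(c) `c` is a 2-cocycle:
`Λ₀_ξ⁻¹(c(η,ζ)(Λ₀_ξ(a)))·c(ξη,ζ)(a)⁻¹·c(ξ,ηζ)(a)·c(ξ,η)(a)⁻¹ = 1_a`. -/
theorem transported_cofactor (C : Cofactor P) (C₀ : Cofactor P₀)
    (hC : IsGenCocycle C) (hC₀ : IsGenCocycle C₀)
    (ρ : ∀ {x y : K} (ξ : x ⟶ y), (P.map ξ ⟶ P₀.map ξ))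
    (hρ : ∀ x : K, ρ (𝟙 x) = eqToHom (by rw [P.map_id, P₀.map_id])) :
    -- (a) naturality of Ω' and its normalization
    ((∀ {x y z : K} (ξ : x ⟶ y) (η : y ⟶ z) {a b : A} (h : a ⟶ b),
      h ≫ omega17 C ρ ξ η b =
        omega17 C ρ ξ η a ≫
          (P₀.inv (ξ ≫ η)).map ((P₀.map η).map ((P₀.map ξ).map h))) ∧
     (∀ {x y : K} (η : x ⟶ y) (a : A),
      omega17 C ρ (𝟙 x) η a = eqToHom (P₀.cof_obj_id_left η a)) ∧
     (∀ {x y : K} (ξ : x ⟶ y) (a : A),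
      omega17 C ρ ξ (𝟙 y) a = eqToHom (P₀.cof_obj_id_right ξ a))) ∧
    -- (b) `c(ξ,η)` is a natural transformation `𝟭_A ⟹ 𝟭_A`
    (∀ {x y z : K} (ξ : x ⟶ y) (η : y ⟶ z) {a b : A} (h : a ⟶ b),
      h ≫ cDiff17 C C₀ ρ ξ η b = cDiff17 C C₀ ρ ξ η a ≫ h) ∧
    -- (c) `c` is a 2-cocycle
    (∀ {x y z w : K} (ξ : x ⟶ y) (η : y ⟶ z) (ζ : z ⟶ w) (a : A),
      (eqToHom (show a = (P₀.inv ξ).obj ((P₀.map ξ).obj a) by simp) ≫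
        (P₀.inv ξ).map (cDiff17 C C₀ ρ η ζ ((P₀.map ξ).obj a)) ≫
        eqToHom (show (P₀.inv ξ).obj ((P₀.map ξ).obj a) = a by simp)) ≫
      Groupoid.inv (cDiff17 C C₀ ρ (ξ ≫ η) ζ a) ≫
      cDiff17 C C₀ ρ ξ (η ≫ ζ) a ≫
      Groupoid.inv (cDiff17 C C₀ ρ ξ η a) = 𝟙 a) := by
  refine ⟨⟨?_, ?_, ?_⟩, ?_, ?_⟩
  · intro x y z ξ η a b h; exact omega17_naturality P P₀ ρ C ξ η h
  · intro x y η a; exact omega17_id_left P P₀ ρ C hρ η a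
  · intro x y ξ a; exact omega17_id_right P P₀ ρ C hρ ξ a
  · intro x y z ξ η a b h; exact cDiff17_naturality P P₀ ρ C C₀ ξ η h
  · intro x y z w ξ η ζ a
    have master := cDiff17_master P P₀ ρ C C₀ hρ hC hC₀ ξ η ζ a
    have comm : cDiff17 C C₀ ρ ξ η a ≫ cDiff17 C C₀ ρ ξ (η ≫ ζ) a =
        cDiff17 C C₀ ρ ξ (η ≫ ζ) a ≫ cDiff17 C C₀ ρ ξ η a :=
      cDiff17_naturality P P₀ ρ C C₀ ξ (η ≫ ζ) (cDiff17 C C₀ ρ ξ η a)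
    rw [← cancel_epi (cDiff17 C C₀ ρ ξ (η ≫ ζ) a)]
    simp only [Category.assoc, Category.comp_id]
    rw [← reassoc_of% master]
    rw [reassoc_of% (show cDiff17 C C₀ ρ (ξ ≫ η) ζ a ≫
        Groupoid.inv (cDiff17 C C₀ ρ (ξ ≫ η) ζ a) = 𝟙 a from Groupoid.comp_inv _)]
    rw [reassoc_of% comm]
    simp [Groupoid.comp_inv]

end Statement17
end
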